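/- arXiv:2405.13577 — 3 statements merged into one kernel-verified Lean document; each statement's English description precedes it below -/
import Mathlib

section
/- Let I be a fractional ideal of B with prime factorisation I = ∏_𝔭 𝔭^{n_𝔭}, and let (1/a_0, g_1(θ)/a_1, …, g_{d−1}(θ)/a_{d−1}) be a triangular basis of I. For each prime p ∈ A set m_p := max{ ⌈n_𝔭/e_𝔭⌉ : 𝔭 | p } (with m_p = 0 if n_𝔭 = 0 for all 𝔭 | p). Then v_p(a_0) = −m_p for every prime p of A, and the normalised ideal I* = a_0·I satisfies I* = ∏_{p} ∏_{𝔭|p} 𝔭^{n_𝔭 − e_𝔭·m_p}, the outer product running over the primes p of A. -/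
/-!
Write `v_𝔭` for exponents in fractional ideals of the Dedekind domain `B`. For `x ∈ K` and
`𝔭 | p` one has `v_𝔭(x) = e_𝔭 · v_p(x)`, so `x ∈ I` exactly when `v_p(x) ≥ ⌈n_𝔭 / e_𝔭⌉` for all
`𝔭 | p` and all `p`. A triangular basis gives `I ∩ K = a₀⁻¹ A`: writing `x ∈ I ∩ K` in the basis
gives a polynomial of degree `< d` with value `x` at `θ`, hence the constant `x`; as the `g_i` are
monic of degree `i`, all coordinates but the one of `1/a₀` vanish.
Hence `v_p(a₀⁻¹) ≥ m_p`; were it larger, `(p a₀)⁻¹` would still lie in `I ∩ K = a₀⁻¹ A`, i.e.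
`p` would be a unit. The factorisation of `a₀ I` then follows by comparing exponents:
`v_𝔭(a₀ I) = -e_𝔭 m_p + n_𝔭`.
-/

open Polynomial

/-- `v_p(x) = k` : the `p`-adic valuation of the nonzero element `x` of the
fraction field equals `k`, i.e. `x = p^k·(u/w)` with `p ∤ u`, `p ∤ w`. -/
def HasValAt {A K : Type*} [CommRing A] [Field K] [Algebra A K]
    (p : A) (x : K) (k : ℤ) : Prop :=
  ∃ u w : A, ¬ p ∣ u ∧ ¬ p ∣ w ∧
    x * algebraMap A K w = algebraMap A K u * algebraMap A K p ^ k

open FractionalIdeal IsDedekindDomain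
open scoped nonZeroDivisors

namespace FractionalIdeal

variable {R : Type*} [CommRing R] [IsDedekindDomain R] {L : Type*} [Field L] [Algebra R L]
  [IsFractionRing R L]

theorem spanSingleton_zpow (x : L) (n : ℤ) :
    spanSingleton R⁰ x ^ n = spanSingleton R⁰ (x ^ n) := by
  cases n with
  | ofNat k => simp only [Int.ofNat_eq_natCast, zpow_natCast, spanSingleton_pow]
  | negSucc k => rw [zpow_negSucc, zpow_negSucc, spanSingleton_pow, spanSingleton_inv]

variable (v : HeightOneSpectrum R)

theorem count_spanSingleton_mul {x y : L} (hx : x ≠ 0) (hy : y ≠ 0) :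
    count L v (spanSingleton R⁰ (x * y)) =
      count L v (spanSingleton R⁰ x) + count L v (spanSingleton R⁰ y) := by
  rw [← spanSingleton_mul_spanSingleton, count_mul L v (spanSingleton_ne_zero_iff.mpr hx)
    (spanSingleton_ne_zero_iff.mpr hy)]

theorem count_spanSingleton_zpow (x : L) (n : ℤ) :
    count L v (spanSingleton R⁰ (x ^ n)) = n * count L v (spanSingleton R⁰ x) := by
  rw [← spanSingleton_zpow, count_zpow]

theorem count_spanSingleton_inv (x : L) :
    count L v (spanSingleton R⁰ x⁻¹) = -count L v (spanSingleton R⁰ x) := by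
  rw [← spanSingleton_inv, count_inv]

theorem count_coeIdeal_of_isPrime {𝔭 : Ideal R} (h𝔭 : 𝔭.IsPrime) (h𝔭0 : 𝔭 ≠ ⊥)
    [Decidable (v.asIdeal = 𝔭)] :
    count L v (𝔭 : FractionalIdeal R⁰ L) = if v.asIdeal = 𝔭 then 1 else 0 := by
  split_ifs with h
  · subst h
    exact count_self L v
  · exact count_maximal_coprime L v (w := ⟨𝔭, h𝔭, h𝔭0⟩) fun h' => h (congrArg (·.asIdeal) h').symm

theorem count_prod_zpow [DecidableEq (Ideal R)] {S : Finset (Ideal R)}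
    (hS : ∀ 𝔭 ∈ S, 𝔭.IsPrime ∧ 𝔭 ≠ ⊥) (E : Ideal R → ℤ) :
    count L v (∏ 𝔭 ∈ S, (𝔭 : FractionalIdeal R⁰ L) ^ E 𝔭) =
      if v.asIdeal ∈ S then E v.asIdeal else 0 := by
  rw [count_prod L v S _ fun 𝔭 h𝔭 => zpow_ne_zero _ (coeIdeal_ne_zero.mpr (hS 𝔭 h𝔭).2),
    ← Finset.sum_ite_eq S v.asIdeal E]
  refine Finset.sum_congr rfl fun 𝔭 h𝔭 => ?_
  rw [count_zpow, count_coeIdeal_of_isPrime v (hS 𝔭 h𝔭).1 (hS 𝔭 h𝔭).2]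
  split_ifs <;> simp

theorem le_one_of_forall_count_nonneg {I : FractionalIdeal R⁰ L} (hI : I ≠ 0)
    (h : ∀ v : HeightOneSpectrum R, 0 ≤ count L v I) : I ≤ 1 := by
  rw [← finprod_heightOneSpectrum_factorization' (K := L) hI]
  refine finprod_induction (· ≤ 1) le_rfl (fun _ _ => mul_le_one') fun v => ?_
  rw [← Int.toNat_of_nonneg (h v), zpow_natCast, ← coeIdeal_pow]
  exact coeIdeal_le_one

theorem le_of_forall_count_le {I J : FractionalIdeal R⁰ L} (hI : I ≠ 0) (hJ : J ≠ 0)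
    (h : ∀ v : HeightOneSpectrum R, count L v J ≤ count L v I) : I ≤ J := by
  have hIJ : I * J⁻¹ ≤ 1 := by
    refine le_one_of_forall_count_nonneg (mul_ne_zero hI (inv_ne_zero hJ)) fun v => ?_
    rw [count_mul L v hI (inv_ne_zero hJ), count_inv]
    linarith [h v]
  calc I = I * J⁻¹ * J := by rw [mul_assoc, inv_mul_cancel₀ hJ, mul_one]
    _ ≤ 1 * J := mul_le_mul_left hIJ J
    _ = J := one_mul J

theorem eq_of_forall_count_eq {I J : FractionalIdeal R⁰ L} (hI : I ≠ 0) (hJ : J ≠ 0)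
    (h : ∀ v : HeightOneSpectrum R, count L v I = count L v J) : I = J :=
  le_antisymm (le_of_forall_count_le hI hJ fun v => (h v).ge)
    (le_of_forall_count_le hJ hI fun v => (h v).le)

theorem mem_iff_forall_count_le {I : FractionalIdeal R⁰ L} (hI : I ≠ 0) {x : L} (hx : x ≠ 0) :
    x ∈ I ↔ ∀ v : HeightOneSpectrum R, count L v I ≤ count L v (spanSingleton R⁰ x) := by
  have hx' : spanSingleton R⁰ x ≠ 0 := spanSingleton_ne_zero_iff.mpr hx
  rw [← spanSingleton_le_iff_mem]
  exact ⟨fun hle v => count_mono L v hx' hle, le_of_forall_count_le hx' hI⟩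

end FractionalIdeal

section PrimesOver

variable {A : Type*} [CommRing A] {R : Type*} [CommRing R] [Algebra A R]

theorem algebraMap_mem_iff_dvd [IsDomain A] [IsPrincipalIdealRing A] {p : A} (hp : Prime p)
    {P : Ideal R} [P.IsPrime] (hpP : algebraMap A R p ∈ P) (r : A) :
    algebraMap A R r ∈ P ↔ p ∣ r := by
  have hcomap : Ideal.span {p} = P.comap (algebraMap A R) :=
    (PrincipalIdealRing.isMaximal_of_irreducible hp.irreducible).eq_of_le
      (Ideal.IsPrime.comap _).ne_top (by rwa [Ideal.span_singleton_le_iff_mem])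
  rw [← Ideal.mem_comap, ← hcomap, Ideal.mem_span_singleton]

theorem exists_prime_algebraMap_mem [IsDomain A] [IsPrincipalIdealRing A] [IsDomain R]
    [Algebra.IsIntegral A R] (v : HeightOneSpectrum R) :
    ∃ q : A, Prime q ∧ algebraMap A R q ∈ v.asIdeal := by
  have hQ : v.asIdeal.comap (algebraMap A R) ≠ ⊥ :=
    fun h => v.ne_bot (Ideal.IsIntegral.eq_bot_of_comap_eq_bot A h)
  exact ⟨_, Submodule.IsPrincipal.prime_generator_of_isPrime _ hQ,
    Submodule.IsPrincipal.generator_mem (v.asIdeal.comap (algebraMap A R))⟩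

theorem exists_heightOneSpectrum_algebraMap_mem [IsDomain A] [IsPrincipalIdealRing A]
    [Algebra.IsIntegral A R] [FaithfulSMul A R] {p : A} (hp : Prime p) :
    ∃ v : HeightOneSpectrum R, algebraMap A R p ∈ v.asIdeal := by
  have := PrincipalIdealRing.isMaximal_of_irreducible hp.irreducible
  obtain ⟨Q, hQ, hQp⟩ :=
    Ideal.exists_maximal_ideal_liesOver_of_isIntegral (S := R) (Ideal.span {p})
  have hpQ : algebraMap A R p ∈ Q := by
    rw [← Ideal.mem_comap, ← Ideal.under_def, ← hQp.over]
    exact Ideal.mem_span_singleton_self p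
  refine ⟨⟨Q, hQ.isPrime, fun hQ0 => hp.ne_zero ?_⟩, hpQ⟩
  rw [hQ0, Ideal.mem_bot] at hpQ
  exact FaithfulSMul.algebraMap_injective A R (hpQ.trans (map_zero _).symm)

theorem ramificationIdx'_span_eq_zero {r : A} {P : Ideal R} (hr : algebraMap A R r ∉ P) :
    Ideal.ramificationIdx' (Ideal.span {r}) P = 0 :=
  Ideal.ramificationIdx'_of_not_le (by
    rwa [Ideal.map_span, Set.image_singleton, Ideal.span_singleton_le_iff_mem])

variable [IsDedekindDomain R] [FaithfulSMul A R] {L : Type*} [Field L] [Algebra R L]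
  [IsFractionRing R L] [Algebra A L] [IsScalarTower A R L]

theorem count_spanSingleton_algebraMap (v : HeightOneSpectrum R) {r : A} (hr : r ≠ 0) :
    count L v (spanSingleton R⁰ (algebraMap A L r)) =
      Ideal.ramificationIdx' (Ideal.span {r}) v.asIdeal := by
  have hmap : (Ideal.span {r}).map (algebraMap A R) = Ideal.span {algebraMap A R r} := by
    rw [Ideal.map_span, Set.image_singleton]
  have hne : (Ideal.span {r}).map (algebraMap A R) ≠ ⊥ :=
    Ideal.map_ne_bot_of_ne_bot (by rwa [Ne, Ideal.span_singleton_eq_bot])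
  rw [IsScalarTower.algebraMap_apply A R L, ← coeIdeal_span_singleton, ← hmap, count_coe L v hne,
    Ideal.count_associates_factors_eq hne v.isPrime v.ne_bot,
    Ideal.IsDedekindDomain.ramificationIdx'_eq_normalizedFactors_count hne v.isPrime v.ne_bot]

theorem ramificationIdx'_span_pos {p : A} (hp : Prime p) (v : HeightOneSpectrum R)
    (hv : algebraMap A R p ∈ v.asIdeal) :
    0 < Ideal.ramificationIdx' (Ideal.span {p}) v.asIdeal := by
  refine Nat.pos_of_ne_zero (Ideal.IsDedekindDomain.ramificationIdx'_ne_zero ?_ v.isPrime ?_)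
  · exact Ideal.map_ne_bot_of_ne_bot (by rw [Ne, Ideal.span_singleton_eq_bot]; exact hp.ne_zero)
  · rwa [Ideal.map_span, Set.image_singleton, Ideal.span_singleton_le_iff_mem]

theorem count_spanSingleton_algebraMap_of_not_dvd [IsDomain A] [IsPrincipalIdealRing A] {p : A}
    (hp : Prime p) (v : HeightOneSpectrum R) (hv : algebraMap A R p ∈ v.asIdeal) {r : A}
    (hr : ¬p ∣ r) : count L v (spanSingleton R⁰ (algebraMap A L r)) = 0 := by
  rw [count_spanSingleton_algebraMap v (by rintro rfl; exact hr (dvd_zero p)),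
    ramificationIdx'_span_eq_zero (by rwa [algebraMap_mem_iff_dvd hp hv]), Nat.cast_zero]

end PrimesOver

theorem ceil_div_natCast_le_iff {n m : ℤ} {e : ℕ} (he : 0 < e) :
    ⌈(n : ℚ) / e⌉ ≤ m ↔ n ≤ m * e := by
  rw [Int.ceil_le, div_le_iff₀ (by exact_mod_cast he)]
  exact_mod_cast Iff.rfl

section HasValAt

variable {A K : Type*} [CommRing A] [Field K] [Algebra A K] [IsFractionRing A K]

theorem exists_hasValAt [IsDomain A] [WfDvdMonoid A] {p : A} (hp : Prime p) {x : K} (hx : x ≠ 0) :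
    ∃ γ : ℤ, HasValAt p x γ := by
  obtain ⟨r, s, hs, rfl⟩ := IsFractionRing.div_surjective (A := A) x
  have hs0 : s ≠ 0 := nonZeroDivisors.ne_zero hs
  have hr0 : r ≠ 0 := by rintro rfl; simp at hx
  obtain ⟨α, u, hu, rfl⟩ := WfDvdMonoid.max_power_factor hr0 hp.irreducible
  obtain ⟨β, w, hw, rfl⟩ := WfDvdMonoid.max_power_factor hs0 hp.irreducible
  have hinj := IsFractionRing.injective A K
  have hpK : algebraMap A K p ≠ 0 := (map_ne_zero_iff _ hinj).mpr hp.ne_zero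
  have hwK : algebraMap A K w ≠ 0 := (map_ne_zero_iff _ hinj).mpr (right_ne_zero_of_mul hs0)
  refine ⟨α - β, u, w, hu, hw, ?_⟩
  rw [zpow_sub₀ hpK, zpow_natCast, zpow_natCast]
  simp only [map_mul, map_pow]
  field_simp

theorem HasValAt.ne_zero {p : A} (hp : Prime p) {x : K} {γ : ℤ} (h : HasValAt p x γ) : x ≠ 0 := by
  obtain ⟨u, w, hu, -, h⟩ := h
  have hinj := IsFractionRing.injective A K
  rintro rfl
  rw [zero_mul, eq_comm] at h
  refine mul_ne_zero ?_ (zpow_ne_zero γ ((map_ne_zero_iff _ hinj).mpr hp.ne_zero)) h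
  exact (map_ne_zero_iff _ hinj).mpr (by rintro rfl; exact hu (dvd_zero p))

theorem HasValAt.inv {p : A} (hp : Prime p) {x : K} {γ : ℤ} (h : HasValAt p x γ) :
    HasValAt p x⁻¹ (-γ) := by
  have hx := h.ne_zero hp
  obtain ⟨u, w, hu, hw, h⟩ := h
  refine ⟨w, u, hw, hu, ?_⟩
  have hpK : algebraMap A K p ≠ 0 :=
    (map_ne_zero_iff _ (IsFractionRing.injective A K)).mpr hp.ne_zero
  rw [zpow_neg]
  field_simp
  linear_combination -h

end HasValAt

/-- The paper's `m_p` is the maximum of this set. -/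
def ceilCountsOver {A R L : Type*} [CommRing A] [CommRing R] [IsDedekindDomain R] [Algebra A R]
    [Field L] [Algebra R L] [IsFractionRing R L] (I : FractionalIdeal R⁰ L) (p : A) : Set ℤ :=
  {z | ∃ v : HeightOneSpectrum R, algebraMap A R p ∈ v.asIdeal ∧
    z = ⌈(count L v I : ℚ) / Ideal.ramificationIdx' (Ideal.span {p}) v.asIdeal⌉}

section Valuation

variable {A : Type*} [CommRing A] [IsDomain A] [IsPrincipalIdealRing A]
  {K : Type*} [Field K] [Algebra A K] [IsFractionRing A K]
  {R : Type*} [CommRing R] [IsDedekindDomain R] [Algebra A R] [FaithfulSMul A R]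
  {L : Type*} [Field L] [Algebra R L] [IsFractionRing R L] [Algebra K L] [Algebra A L]
  [IsScalarTower A K L] [IsScalarTower A R L]

theorem HasValAt.count_spanSingleton {p : A} (hp : Prime p) {x : K} {γ : ℤ}
    (h : HasValAt p x γ) (v : HeightOneSpectrum R) (hv : algebraMap A R p ∈ v.asIdeal) :
    count L v (spanSingleton R⁰ (algebraMap K L x)) =
      γ * Ideal.ramificationIdx' (Ideal.span {p}) v.asIdeal := by
  obtain ⟨u, w, hu, hw, h⟩ := h
  have hinj : Function.Injective (algebraMap A L) := by
    rw [IsScalarTower.algebraMap_eq A K L]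
    exact (algebraMap K L).injective.comp (IsFractionRing.injective A K)
  have hne {r : A} (hr : ¬p ∣ r) : algebraMap A L r ≠ 0 :=
    (map_ne_zero_iff _ hinj).mpr (by rintro rfl; exact hr (dvd_zero p))
  have hpL : algebraMap A L p ^ γ ≠ 0 := zpow_ne_zero _ ((map_ne_zero_iff _ hinj).mpr hp.ne_zero)
  have hL : algebraMap K L x * algebraMap A L w = algebraMap A L u * algebraMap A L p ^ γ := by
    simpa only [map_mul, map_zpow₀, ← IsScalarTower.algebraMap_apply] using
      congrArg (algebraMap K L) h
  have hx : algebraMap K L x ≠ 0 := by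
    rintro h0
    rw [h0, zero_mul] at hL
    exact mul_ne_zero (hne hu) hpL hL.symm
  have hcount := congrArg (fun y => count L v (spanSingleton R⁰ y)) hL
  rw [count_spanSingleton_mul v hx (hne hw), count_spanSingleton_mul v (hne hu) hpL,
    count_spanSingleton_zpow, count_spanSingleton_algebraMap_of_not_dvd hp v hv hw,
    count_spanSingleton_algebraMap_of_not_dvd hp v hv hu,
    count_spanSingleton_algebraMap v hp.ne_zero] at hcount
  linarith

theorem le_of_mem_ceilCountsOver {I : FractionalIdeal R⁰ L} (hI : I ≠ 0) {p : A} (hp : Prime p)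
    {x : K} {γ : ℤ} (hγ : HasValAt p x γ) (hx : algebraMap K L x ∈ I) {M : ℤ}
    (hM : M ∈ ceilCountsOver I p) : M ≤ γ := by
  obtain ⟨v, hv, rfl⟩ := hM
  rw [ceil_div_natCast_le_iff (ramificationIdx'_span_pos hp v hv),
    ← hγ.count_spanSingleton (L := L) hp v hv]
  exact (mem_iff_forall_count_le hI ((_root_.map_ne_zero _).mpr (hγ.ne_zero hp))).mp hx v

theorem algebraMap_div_mem_of_upperBounds {I : FractionalIdeal R⁰ L} (hI : I ≠ 0) {p : A}
    (hp : Prime p) {x : K} {γ : ℤ} (hγ : HasValAt p x γ) (hx : algebraMap K L x ∈ I) {M : ℤ}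
    (hM : M ∈ upperBounds (ceilCountsOver I p)) (hMγ : M < γ) :
    algebraMap K L (x / algebraMap A K p) ∈ I := by
  have hx0 : algebraMap K L x ≠ 0 := (_root_.map_ne_zero _).mpr (hγ.ne_zero hp)
  have hpL : algebraMap A L p ≠ 0 := by
    rw [IsScalarTower.algebraMap_apply A K L]
    exact (_root_.map_ne_zero _).mpr
      ((map_ne_zero_iff _ (IsFractionRing.injective A K)).mpr hp.ne_zero)
  rw [map_div₀, ← IsScalarTower.algebraMap_apply A K L, div_eq_mul_inv,
    mem_iff_forall_count_le hI (mul_ne_zero hx0 (inv_ne_zero hpL))]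
  intro v
  rw [count_spanSingleton_mul v hx0 (inv_ne_zero hpL), count_spanSingleton_inv,
    count_spanSingleton_algebraMap v hp.ne_zero]
  by_cases hv : algebraMap A R p ∈ v.asIdeal
  · have he := ramificationIdx'_span_pos hp v hv
    have hcount := (ceil_div_natCast_le_iff he).mp (hM ⟨v, hv, rfl⟩)
    rw [hγ.count_spanSingleton hp v hv]
    nlinarith
  · rw [ramificationIdx'_span_eq_zero hv, Nat.cast_zero, neg_zero, add_zero]
    exact (mem_iff_forall_count_le hI hx0).mp hx v

theorem hasValAt_neg_of_isGreatest {I : FractionalIdeal R⁰ L} (hI : I ≠ 0) {a₀ : K}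
    (ha₀ : a₀ ≠ 0) (hIK : ∀ x : K, algebraMap K L x ∈ I ↔ ∃ c : A, x = algebraMap A K c / a₀)
    {p : A} (hp : Prime p) {M : ℤ} (hM : IsGreatest (ceilCountsOver I p) M) :
    HasValAt p a₀ (-M) := by
  obtain ⟨γ, hγ⟩ := exists_hasValAt hp ha₀
  have hinv : algebraMap K L a₀⁻¹ ∈ I := (hIK _).mpr ⟨1, by rw [map_one, one_div]⟩
  have hle : M ≤ -γ := le_of_mem_ceilCountsOver hI hp (hγ.inv hp) hinv hM.1
  have hge : -γ ≤ M := by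
    by_contra! hlt
    obtain ⟨c, hc⟩ :=
      (hIK _).mp (algebraMap_div_mem_of_upperBounds hI hp (hγ.inv hp) hinv hM.2 hlt)
    refine hp.not_dvd_one ⟨c, IsFractionRing.injective A K ?_⟩
    have hpK : algebraMap A K p ≠ 0 :=
      (map_ne_zero_iff _ (IsFractionRing.injective A K)).mpr hp.ne_zero
    rw [map_one, map_mul]
    field_simp at hc
    exact hc
  obtain rfl : γ = -M := by omega
  exact hγ

end Valuation

namespace Polynomial

variable {S : Type*} [Semiring S] {d : ℕ} {g : Fin d → S[X]}

theorem coeff_sum_C_mul_of_forall_lt (hg : ∀ i, (g i).Monic)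
    (hgdeg : ∀ i, (g i).natDegree = i) {s : Fin d → S} {j : Fin d} (hs : ∀ i, j < i → s i = 0) :
    (∑ i, C (s i) * g i).coeff j = s j := by
  rw [finsetSum_coeff, Finset.sum_eq_single j]
  · rw [coeff_C_mul, ← hgdeg j, (hg j).coeff_natDegree, mul_one]
  · intro i _ hij
    rcases lt_or_gt_of_ne hij with h | h
    · rw [coeff_C_mul, coeff_eq_zero_of_natDegree_lt (by rw [hgdeg]; exact h), mul_zero]
    · rw [hs i h, C_0, zero_mul, coeff_zero]
  · simp

theorem eq_zero_of_sum_C_mul_eq_C (hg : ∀ i, (g i).Monic) (hgdeg : ∀ i, (g i).natDegree = i)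
    {s : Fin d → S} {x : S} (h : ∑ i, C (s i) * g i = C x) (i : Fin d) (hi : 0 < (i : ℕ)) :
    s i = 0 := by
  classical
  by_contra hne
  set T := Finset.univ.filter fun i : Fin d => 0 < (i : ℕ) ∧ s i ≠ 0
  have hT : T.Nonempty := ⟨i, by simp [T, hi, hne]⟩
  have hj := (Finset.mem_filter.mp (T.max'_mem hT)).2
  -- at the largest such index `j`, the coefficient of `X ^ j` is `s j ≠ 0`
  have hcoeff := coeff_sum_C_mul_of_forall_lt hg hgdeg (s := s) (j := T.max' hT) fun k hk => by
    by_contra hk0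
    exact (T.le_max' k (by simp [T, hk0, hj.1.trans hk])).not_gt hk
  rw [h, coeff_C, if_neg hj.1.ne'] at hcoeff
  exact hj.2 hcoeff.symm

theorem natDegree_sum_C_mul_lt (hd : 0 < d) (hgdeg : ∀ i, (g i).natDegree = i) (s : Fin d → S) :
    (∑ i, C (s i) * g i).natDegree < d := by
  refine lt_of_le_of_lt (natDegree_sum_le_of_forall_le _ _ (n := d - 1) fun i _ => ?_) (by omega)
  exact (natDegree_C_mul_le _ _).trans (by rw [hgdeg]; omega)

end Polynomial

theorem eq_C_of_aeval_eq_algebraMap {K L : Type*} [Field K] [Field L] [Algebra K L]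
    [FiniteDimensional K L] {θ : L} (hgen : Algebra.adjoin K {θ} = ⊤) {P : K[X]}
    (hP : P.natDegree < Module.finrank K L) {x : K} (h : aeval θ P = algebraMap K L x) :
    P = C x := by
  have hmin : Module.finrank K L = (minpoly K θ).natDegree :=
    (PowerBasis.ofAdjoinEqTop (Algebra.IsIntegral.isIntegral θ) hgen).finrank
  rw [← sub_eq_zero]
  by_contra hne
  have := natDegree_le_natDegree (minpoly.degree_le_of_ne_zero K θ hne (by simp [h]))
  rw [natDegree_sub_C] at this
  omega

theorem algebraMap_mem_iff_of_triangular {A K L : Type*} [CommRing A] [Field K] [Algebra A K]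
    [Field L] [Algebra K L] [Algebra A L] [IsScalarTower A K L] {d : ℕ} (hd : 0 < d) {θ : L}
    (hgen : Algebra.adjoin K {θ} = ⊤) (hdim : Module.finrank K L = d) (a : Fin d → K)
    {g : Fin d → A[X]} (hg : ∀ i, (g i).Monic) (hgdeg : ∀ i : Fin d, (g i).natDegree = i)
    {N : Submodule A L} (b : Module.Basis (Fin d) A N)
    (hb : ∀ i, (b i : L) = aeval θ (g i) / algebraMap K L (a i)) (x : K) :
    algebraMap K L x ∈ N ↔ ∃ c : A, x = algebraMap A K c / a ⟨0, hd⟩ := by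
  have : FiniteDimensional K L := Module.finite_of_finrank_pos (hdim ▸ hd)
  constructor
  · intro hx
    set c := b.repr ⟨_, hx⟩
    set s : Fin d → K := fun i => algebraMap A K (c i) / a i
    set g' : Fin d → K[X] := fun i => (g i).map (algebraMap A K)
    have hg' : ∀ i, (g' i).Monic := fun i => (hg i).map _
    have hg'deg : ∀ i, (g' i).natDegree = i := fun i => ((hg i).natDegree_map _).trans (hgdeg i)
    have hP : aeval θ (∑ i, C (s i) * g' i) = algebraMap K L x := by
      have hsum : ∑ i, c i • (b i : L) = algebraMap K L x := by
        simpa only [Submodule.coe_sum, Submodule.coe_smul] using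
          congrArg Subtype.val (b.sum_repr ⟨_, hx⟩)
      rw [← hsum, map_sum]
      refine Finset.sum_congr rfl fun i _ => ?_
      rw [hb, map_mul, aeval_C, aeval_map_algebraMap, Algebra.smul_def,
        IsScalarTower.algebraMap_apply A K L, map_div₀]
      ring
    have hPx := eq_C_of_aeval_eq_algebraMap hgen (hdim ▸ natDegree_sum_C_mul_lt hd hg'deg s) hP
    have hx₀ := coeff_sum_C_mul_of_forall_lt hg' hg'deg (j := ⟨0, hd⟩)
      fun i hi => eq_zero_of_sum_C_mul_eq_C hg' hg'deg hPx i hi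
    rw [hPx, coeff_C_zero] at hx₀
    exact ⟨c ⟨0, hd⟩, hx₀⟩
  · rintro ⟨c, rfl⟩
    have hg₀ : g ⟨0, hd⟩ = 1 := (hg _).natDegree_eq_zero.mp (hgdeg _)
    have := N.smul_mem c (b ⟨0, hd⟩).2
    rwa [hb, hg₀, map_one, Algebra.smul_def, IsScalarTower.algebraMap_apply A K L, mul_one_div,
      ← map_div₀] at this

section Factorisation

variable {A : Type*} [CommRing A] {R : Type*} [CommRing R] [IsDedekindDomain R] [Algebra A R]
  {L : Type*} [Field L] [Algebra R L] [IsFractionRing R L]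

theorem ceilCountsOver_eq_of_forall_mem {I : FractionalIdeal R⁰ L} {S : Finset (Ideal R)}
    (hS : ∀ 𝔭 ∈ S, 𝔭.IsPrime ∧ 𝔭 ≠ ⊥) {n : Ideal R → ℤ}
    (hI : I = ∏ 𝔭 ∈ S, (𝔭 : FractionalIdeal R⁰ L) ^ n 𝔭) {p : A}
    (hpS : ∀ Q : Ideal R, Q.IsPrime → Q ≠ ⊥ → algebraMap A R p ∈ Q → Q ∈ S) :
    {z : ℤ | ∃ 𝔮 ∈ S, algebraMap A R p ∈ 𝔮 ∧
      z = ⌈(n 𝔮 : ℚ) / (Ideal.ramificationIdx' (Ideal.span {p}) 𝔮 : ℚ)⌉} =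
      ceilCountsOver I p := by
  classical
  ext z
  constructor
  · rintro ⟨𝔮, h𝔮, hp𝔮, rfl⟩
    refine ⟨⟨𝔮, (hS 𝔮 h𝔮).1, (hS 𝔮 h𝔮).2⟩, hp𝔮, ?_⟩
    rw [hI, count_prod_zpow _ hS, if_pos h𝔮]
  · rintro ⟨v, hv, rfl⟩
    have hvS := hpS v.asIdeal v.isPrime v.ne_bot hv
    exact ⟨v.asIdeal, hvS, hv, by rw [hI, count_prod_zpow _ hS, if_pos hvS]⟩

theorem isGreatest_ceilCountsOver_zero [IsDomain A] [IsPrincipalIdealRing A]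
    [Algebra.IsIntegral A R] [FaithfulSMul A R] {I : FractionalIdeal R⁰ L} {p : A} (hp : Prime p)
    (hI : ∀ v : HeightOneSpectrum R, algebraMap A R p ∈ v.asIdeal → count L v I = 0) :
    IsGreatest (ceilCountsOver I p) 0 := by
  obtain ⟨v, hv⟩ := exists_heightOneSpectrum_algebraMap_mem (R := R) hp
  refine ⟨⟨v, hv, by simp [hI v hv]⟩, ?_⟩
  rintro z ⟨w, hw, rfl⟩
  simp [hI w hw]

end Factorisation

theorem faithfulSMul_integralClosure (A K L : Type*) [CommRing A] [Field K] [Algebra A K]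
    [IsFractionRing A K] [Field L] [Algebra K L] [Algebra A L] [IsScalarTower A K L] :
    FaithfulSMul A (integralClosure A L) := by
  rw [faithfulSMul_iff_algebraMap_injective]
  refine .of_comp (f := algebraMap (integralClosure A L) L) ?_
  rw [← RingHom.coe_comp, ← IsScalarTower.algebraMap_eq, IsScalarTower.algebraMap_eq A K L]
  exact (algebraMap K L).injective.comp (IsFractionRing.injective A K)

theorem statement12_general
    -- `A` : a principal ideal domain with fraction field `K`
    (A : Type*) [CommRing A] [IsDomain A] [IsPrincipalIdealRing A]
    (K : Type*) [Field K] [Algebra A K] [IsFractionRing A K]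
    -- `L = K(θ)` of degree `d`, `B` the integral closure of `A` in `L`
    -- (a Dedekind domain with fraction field `L`)
    (L : Type*) [Field L] [Algebra K L] [Algebra A L] [IsScalarTower A K L]
    (d : ℕ) (hd : 0 < d)
    (θ : L) (hgen : Algebra.adjoin K {θ} = ⊤)
    (hdim : Module.finrank K L = d)
    [IsDedekindDomain ↥(integralClosure A L)]
    [IsFractionRing ↥(integralClosure A L) L]
    -- `I` : a nonzero fractional ideal of `B`
    (I : FractionalIdeal (nonZeroDivisors ↥(integralClosure A L)) L) (hI : I ≠ 0)
    -- the prime factorisation `I = ∏_{𝔭 ∈ S} 𝔭^{n_𝔭}` of `I` : `S` is a set of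
    -- nonzero prime ideals of `B` which is saturated (if it contains one prime
    -- over a prime `p` of `A` then it contains all of them)
    (S : Finset (Ideal ↥(integralClosure A L)))
    (hSprime : ∀ 𝔭 ∈ S, 𝔭.IsPrime ∧ 𝔭 ≠ ⊥)
    (hSsat : ∀ p : A, Prime p →
      (∃ 𝔭 ∈ S, algebraMap A ↥(integralClosure A L) p ∈ 𝔭) →
      ∀ Q : Ideal ↥(integralClosure A L), Q.IsPrime → Q ≠ ⊥ →
        algebraMap A ↥(integralClosure A L) p ∈ Q → Q ∈ S)
    (n : Ideal ↥(integralClosure A L) → ℤ)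
    (hfac : I = ∏ 𝔭 ∈ S,
      (𝔭 : FractionalIdeal (nonZeroDivisors ↥(integralClosure A L)) L) ^ n 𝔭)
    -- the primes of `A` below the elements of `S`
    (below : Ideal ↥(integralClosure A L) → A)
    (hbelow : ∀ 𝔭 ∈ S, Prime (below 𝔭) ∧
      algebraMap A ↥(integralClosure A L) (below 𝔭) ∈ 𝔭)
    -- `m 𝔭 = m_p` for `p` the prime below `𝔭` :
    -- `m_p = max{⌈n_𝔮/e_𝔮⌉ : 𝔮 | p}`, `e_𝔮` being the ramification index
    (m : Ideal ↥(integralClosure A L) → ℤ)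
    (hm : ∀ 𝔭 ∈ S, IsGreatest {z : ℤ | ∃ 𝔮 ∈ S,
      algebraMap A ↥(integralClosure A L) (below 𝔭) ∈ 𝔮 ∧
      z = ⌈(n 𝔮 : ℚ) / (Ideal.ramificationIdx'
        (Ideal.span {below 𝔭}) 𝔮 : ℚ)⌉} (m 𝔭))
    -- a triangular basis `(1/a_0, g_1(θ)/a_1, …, g_{d−1}(θ)/a_{d−1})` of `I`
    (a : Fin d → K) (ha : ∀ i, a i ≠ 0)
    (g : Fin d → Polynomial A)
    (hgmonic : ∀ i, (g i).Monic) (hgdeg : ∀ i : Fin d, (g i).natDegree = (i : ℕ))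
    (b : Module.Basis (Fin d) A
      ↥((I : Submodule ↥(integralClosure A L) L).restrictScalars A))
    (hb : ∀ i : Fin d, (b i : L) = aeval θ (g i) / algebraMap K L (a i)) :
    -- conclusion (1) : `v_p(a_0) = −m_p` for every prime `p` of `A`
    (∀ p : A, Prime p →
      ((∃ 𝔭 ∈ S, algebraMap A ↥(integralClosure A L) p ∈ 𝔭) →
        ∀ mp : ℤ, IsGreatest {z : ℤ | ∃ 𝔮 ∈ S,
            algebraMap A ↥(integralClosure A L) p ∈ 𝔮 ∧
            z = ⌈(n 𝔮 : ℚ) /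
              (Ideal.ramificationIdx'
                (Ideal.span {p}) 𝔮 : ℚ)⌉} mp →
          HasValAt p (a ⟨0, hd⟩) (-mp)) ∧
      ((∀ 𝔭 ∈ S, algebraMap A ↥(integralClosure A L) p ∉ 𝔭) →
        HasValAt p (a ⟨0, hd⟩) 0)) ∧
    -- conclusion (2) : `I* = a_0·I = ∏_{𝔭} 𝔭^{n_𝔭 − e_𝔭·m_p}`
    FractionalIdeal.spanSingleton (nonZeroDivisors ↥(integralClosure A L))
        (algebraMap K L (a ⟨0, hd⟩)) * I =
      ∏ 𝔭 ∈ S, (𝔭 : FractionalIdeal (nonZeroDivisors ↥(integralClosure A L)) L) ^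
        (n 𝔭 - (Ideal.ramificationIdx'
          (Ideal.span {below 𝔭}) 𝔭 : ℤ) * m 𝔭) := by
  classical
  have := faithfulSMul_integralClosure A K L
  have hIK := algebraMap_mem_iff_of_triangular hd hgen hdim a hgmonic hgdeg b hb
  have hcount (v : HeightOneSpectrum (integralClosure A L)) :
      count L v I = if v.asIdeal ∈ S then n v.asIdeal else 0 :=
    hfac ▸ count_prod_zpow v hSprime n
  have hval {p : A} (hp : Prime p) {M : ℤ} (hM : IsGreatest (ceilCountsOver I p) M) :
      HasValAt p (a ⟨0, hd⟩) (-M) :=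
    hasValAt_neg_of_isGreatest hI (ha _) hIK hp hM
  have hset {p : A} (hp : Prime p) (hpS : ∃ 𝔭 ∈ S, algebraMap A _ p ∈ 𝔭) :=
    ceilCountsOver_eq_of_forall_mem hSprime hfac (hSsat p hp hpS)
  have hval_zero {p : A} (hp : Prime p) (hpS : ∀ 𝔭 ∈ S, algebraMap A _ p ∉ 𝔭) :
      HasValAt p (a ⟨0, hd⟩) 0 :=
    neg_zero (G := ℤ) ▸ hval hp (isGreatest_ceilCountsOver_zero hp fun v hv => by
      rw [hcount, if_neg fun hvS => hpS _ hvS hv])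
  have ha₀ : spanSingleton (integralClosure A L)⁰ (algebraMap K L (a ⟨0, hd⟩)) ≠ 0 :=
    spanSingleton_ne_zero_iff.mpr ((_root_.map_ne_zero _).mpr (ha _))
  refine ⟨fun p hp => ⟨fun hpS M hM => hval hp (hset hp hpS ▸ hM), hval_zero hp⟩,
    eq_of_forall_count_eq (mul_ne_zero ha₀ hI) (Finset.prod_ne_zero_iff.mpr fun 𝔭 h𝔭 =>
      zpow_ne_zero _ (coeIdeal_ne_zero.mpr (hSprime 𝔭 h𝔭).2)) fun v => ?_⟩
  rw [count_mul L v ha₀ hI, count_prod_zpow v hSprime, hcount]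
  split_ifs with hvS
  · obtain ⟨hp, hpv⟩ := hbelow _ hvS
    rw [(hval hp (hset hp ⟨_, hvS, hpv⟩ ▸ hm _ hvS)).count_spanSingleton hp v hpv]
    ring
  · obtain ⟨q, hq, hqv⟩ := exists_prime_algebraMap_mem (A := A) v
    have hqS : ∀ 𝔭 ∈ S, algebraMap A _ q ∉ 𝔭 := fun 𝔭 h𝔭 hq𝔭 =>
      hvS (hSsat q hq ⟨𝔭, h𝔭, hq𝔭⟩ _ v.isPrime v.ne_bot hqv)
    rw [(hval_zero hq hqS).count_spanSingleton hq v hqv]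
    ring

/-- let `I = ∏_𝔭 𝔭^{n_𝔭}` be a fractional ideal of `B` with a
triangular basis `(1/a_0, g_1(θ)/a_1, …, g_{d−1}(θ)/a_{d−1})`, and for each prime
`p` of `A` let `m_p := max{⌈n_𝔭/e_𝔭⌉ : 𝔭 | p}` (`m_p = 0` when `n_𝔭 = 0` for all
`𝔭 | p`). Then `v_p(a_0) = −m_p` for every prime `p` of `A`, and the normalised
ideal `I* = a_0·I` satisfies `I* = ∏_p ∏_{𝔭|p} 𝔭^{n_𝔭 − e_𝔭·m_p}`. -/
theorem statement12
    -- `A` : a principal ideal domain with fraction field `K`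
    (A : Type*) [CommRing A] [IsDomain A] [IsPrincipalIdealRing A]
    (K : Type*) [Field K] [Algebra A K] [IsFractionRing A K]
    -- `L = K(θ)` of degree `d`, `B` the integral closure of `A` in `L`
    -- (a Dedekind domain with fraction field `L`)
    (L : Type*) [Field L] [Algebra K L] [Algebra A L] [IsScalarTower A K L]
    (f : Polynomial A) (d : ℕ) (hd : 0 < d)
    (hf : f.Monic) (hfdeg : f.natDegree = d) (hfirr : Irreducible f)
    (hfsep : (f.map (algebraMap A K)).Separable)
    (θ : L) (hroot : aeval θ f = 0) (hgen : Algebra.adjoin K {θ} = ⊤)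
    (hdim : Module.finrank K L = d)
    [IsDedekindDomain ↥(integralClosure A L)]
    [IsFractionRing ↥(integralClosure A L) L]
    -- `I` : a nonzero fractional ideal of `B`
    (I : FractionalIdeal (nonZeroDivisors ↥(integralClosure A L)) L) (hI : I ≠ 0)
    -- the prime factorisation `I = ∏_{𝔭 ∈ S} 𝔭^{n_𝔭}` of `I` : `S` is a set of
    -- nonzero prime ideals of `B` which is saturated (if it contains one prime
    -- over a prime `p` of `A` then it contains all of them)
    (S : Finset (Ideal ↥(integralClosure A L)))
    (hSprime : ∀ 𝔭 ∈ S, 𝔭.IsPrime ∧ 𝔭 ≠ ⊥)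
    (hSsat : ∀ p : A, Prime p →
      (∃ 𝔭 ∈ S, algebraMap A ↥(integralClosure A L) p ∈ 𝔭) →
      ∀ Q : Ideal ↥(integralClosure A L), Q.IsPrime → Q ≠ ⊥ →
        algebraMap A ↥(integralClosure A L) p ∈ Q → Q ∈ S)
    (n : Ideal ↥(integralClosure A L) → ℤ)
    (hfac : I = ∏ 𝔭 ∈ S,
      (𝔭 : FractionalIdeal (nonZeroDivisors ↥(integralClosure A L)) L) ^ n 𝔭)
    -- the primes of `A` below the elements of `S`
    (below : Ideal ↥(integralClosure A L) → A)
    (hbelow : ∀ 𝔭 ∈ S, Prime (below 𝔭) ∧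
      algebraMap A ↥(integralClosure A L) (below 𝔭) ∈ 𝔭)
    -- `m 𝔭 = m_p` for `p` the prime below `𝔭` :
    -- `m_p = max{⌈n_𝔮/e_𝔮⌉ : 𝔮 | p}`, `e_𝔮` being the ramification index
    (m : Ideal ↥(integralClosure A L) → ℤ)
    (hm : ∀ 𝔭 ∈ S, IsGreatest {z : ℤ | ∃ 𝔮 ∈ S,
      algebraMap A ↥(integralClosure A L) (below 𝔭) ∈ 𝔮 ∧
      z = ⌈(n 𝔮 : ℚ) / (Ideal.ramificationIdx'
        (Ideal.span {below 𝔭}) 𝔮 : ℚ)⌉} (m 𝔭))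
    -- a triangular basis `(1/a_0, g_1(θ)/a_1, …, g_{d−1}(θ)/a_{d−1})` of `I`
    (a : Fin d → K) (ha : ∀ i, a i ≠ 0)
    (hchain : ∀ i j : Fin d, i ≤ j → ∃ c : A, a j = a i * algebraMap A K c)
    (g : Fin d → Polynomial A)
    (hgmonic : ∀ i, (g i).Monic) (hgdeg : ∀ i : Fin d, (g i).natDegree = (i : ℕ))
    (b : Module.Basis (Fin d) A
      ↥((I : Submodule ↥(integralClosure A L) L).restrictScalars A))
    (hb : ∀ i : Fin d, (b i : L) = aeval θ (g i) / algebraMap K L (a i)) :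
    -- conclusion (1) : `v_p(a_0) = −m_p` for every prime `p` of `A`
    (∀ p : A, Prime p →
      ((∃ 𝔭 ∈ S, algebraMap A ↥(integralClosure A L) p ∈ 𝔭) →
        ∀ mp : ℤ, IsGreatest {z : ℤ | ∃ 𝔮 ∈ S,
            algebraMap A ↥(integralClosure A L) p ∈ 𝔮 ∧
            z = ⌈(n 𝔮 : ℚ) /
              (Ideal.ramificationIdx'
                (Ideal.span {p}) 𝔮 : ℚ)⌉} mp →
          HasValAt p (a ⟨0, hd⟩) (-mp)) ∧
      ((∀ 𝔭 ∈ S, algebraMap A ↥(integralClosure A L) p ∉ 𝔭) →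
        HasValAt p (a ⟨0, hd⟩) 0)) ∧
    -- conclusion (2) : `I* = a_0·I = ∏_{𝔭} 𝔭^{n_𝔭 − e_𝔭·m_p}`
    FractionalIdeal.spanSingleton (nonZeroDivisors ↥(integralClosure A L))
        (algebraMap K L (a ⟨0, hd⟩)) * I =
      ∏ 𝔭 ∈ S, (𝔭 : FractionalIdeal (nonZeroDivisors ↥(integralClosure A L)) L) ^
        (n 𝔭 - (Ideal.ramificationIdx'
          (Ideal.span {below 𝔭}) 𝔭 : ℤ) * m 𝔭) :=
  statement12_general A K L d hd θ hgen hdim I hI S hSprime hSsat n hfac below hbelow m hm a ha g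
    hgmonic hgdeg b hb
end

section
/- Suppose A = k[t] with h(p) := deg(p) (respectively A = ℤ with h(p) := log|p|) for primes p of A. Let D ∈ A be a generator of the index ideal [B : A[θ]] and set h(D) := Σ_p v_p(D)·h(p). Let I be a fractional ideal of B with normalised ideal I*, and define the normalised size h(I) := Σ_p v_p([I* : A[θ]])·h(p). Then h(I) ≥ h(D), with equality if and only if I = α·B for some α ∈ K \ {0}. -/
/-!
Since `1/a₀ ∈ I`, the normalised ideal `I* = a₀·I` contains `B`; expressing an `A`-basis of `B`
in the basis `a₀·bI` of `I*` gives a matrix `S` over `A = k[t]` with `TI = S·TB`. Sizes of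
nonzero polynomials are degrees, so `h(I) = deg (det S) + h(D)`, with equality iff `det S` is a
unit, i.e. iff `I* ⊆ B`. As `1/a₀` belongs to an `A`-basis of `I`, which is `K`-linearly
independent, `I ∩ K = a₀⁻¹·A`. Hence `I = α·B` forces `a₀α ∈ A` and `I* = a₀α·B ⊆ B`, while
conversely `I* ⊆ B ⊆ I*` gives `I = a₀⁻¹·B`.
-/

open Polynomial

/-- The size `h(c) = Σ_p v_p(c)·h(p)` of an element `c` of `A = k[t]`, where
`h(p) = deg p` : the sum of the degrees (with multiplicity) of the prime factors
of `c`. -/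
noncomputable def polySize {𝕜 : Type*} [Field 𝕜] (c : Polynomial 𝕜) : ℕ :=
  ((UniqueFactorizationMonoid.factors c).map Polynomial.natDegree).sum

theorem polySize_eq_natDegree {𝕜 : Type*} [Field 𝕜] {c : 𝕜[X]} (hc : c ≠ 0) :
    polySize c = c.natDegree := by
  have hzero : (0 : 𝕜[X]) ∉ UniqueFactorizationMonoid.factors c := fun h =>
    not_irreducible_zero (UniqueFactorizationMonoid.irreducible_of_factor 0 h)
  rw [polySize, ← natDegree_multiset_prod _ hzero]
  exact natDegree_eq_of_degree_eq
    (degree_eq_degree_of_associated (UniqueFactorizationMonoid.factors_prod hc))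

theorem Polynomial.isUnit_iff_natDegree_eq_zero {𝕜 : Type*} [Field 𝕜] {p : 𝕜[X]} (hp : p ≠ 0) :
    IsUnit p ↔ p.natDegree = 0 :=
  isUnit_iff_degree_eq_zero.trans (degree_eq_iff_natDegree_eq hp)

section LinearCombination

variable {R M ι κ μ : Type*} [Fintype ι] [Fintype κ]

theorem sum_smul_eq_sum_mul_smul [CommSemiring R] [AddCommMonoid M] [Module R M]
    {c : ι → M} {w : κ → M} {S : Matrix ι κ R} (hw : ∀ l, w l = ∑ i, S i l • c i)
    (T : Matrix κ μ R) (k : μ) :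
    ∑ l, T l k • w l = ∑ i, (S * T) i k • c i := by
  simp only [hw, Finset.smul_sum, smul_smul, Matrix.mul_apply, Finset.sum_smul]
  rw [Finset.sum_comm]
  simp only [mul_comm]

theorem eq_mul_of_linearIndependent [CommSemiring R] [AddCommMonoid M] [Module R M]
    {c : ι → M} {w : κ → M} {v : μ → M} {S : Matrix ι κ R} {T : Matrix κ μ R}
    {U : Matrix ι μ R} (hc : LinearIndependent R c) (hw : ∀ l, w l = ∑ i, S i l • c i)
    (hv : ∀ k, v k = ∑ l, T l k • w l) (hv' : ∀ k, v k = ∑ i, U i k • c i) :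
    U = S * T := by
  refine Matrix.ext fun i k => ?_
  exact Fintype.linearIndependent_iffₛ.mp hc (fun i => U i k) (fun i => (S * T) i k)
    (by rw [← hv' k, hv k, sum_smul_eq_sum_mul_smul hw]) i

theorem det_ne_zero_of_linearIndependent [CommRing R] [IsDomain R] [AddCommGroup M]
    [Module R M] [DecidableEq ι] {v w : ι → M} {T : Matrix ι ι R}
    (hv : LinearIndependent R v) (h : ∀ k, v k = ∑ l, T l k • w l) : T.det ≠ 0 := by
  intro hdet
  obtain ⟨x, hx0, hx⟩ := Matrix.exists_mulVec_eq_zero_iff.mpr hdet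
  have hsum : ∑ k, x k • v k = 0 := by
    simp only [h, Finset.smul_sum, smul_smul]
    rw [Finset.sum_comm]
    simp only [← Finset.sum_smul]
    refine Finset.sum_eq_zero fun l _ => ?_
    simpa [Matrix.mulVec, dotProduct, mul_comm] using congrArg (· • w l) (congrFun hx l)
  exact hx0 (funext (Fintype.linearIndependent_iff.mp hv x hsum))

theorem isUnit_det_iff_forall_mem_span [CommRing R] [AddCommGroup M] [Module R M]
    [DecidableEq ι] {c w : ι → M} {S : Matrix ι ι R} (hc : LinearIndependent R c)
    (hw : ∀ l, w l = ∑ i, S i l • c i) :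
    IsUnit S.det ↔ ∀ j, c j ∈ Submodule.span R (Set.range w) := by
  constructor
  · intro hS j
    have hc_eq : c j = ∑ l, S⁻¹ l j • w l := by
      simp [sum_smul_eq_sum_mul_smul hw, Matrix.mul_nonsing_inv _ hS, Matrix.one_apply]
    rw [hc_eq]
    exact Submodule.sum_mem _ fun l _ => Submodule.smul_mem _ _ (Submodule.subset_span ⟨l, rfl⟩)
  · intro hspan
    choose coeff hcoeff using fun j => (Submodule.mem_span_range_iff_exists_fun R).mp (hspan j)
    refine Matrix.isUnit_det_of_right_inverse (B := Matrix.of fun l j => coeff j l)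
      (eq_mul_of_linearIndependent hc hw (fun j => (hcoeff j).symm) fun j => ?_).symm
    simp [Matrix.one_apply]

end LinearCombination

theorem Module.Basis.span_range_coe {R M ι : Type*} [Semiring R] [AddCommMonoid M] [Module R M]
    {p : Submodule R M} (b : Module.Basis ι R p) :
    Submodule.span R (Set.range fun i => (b i : M)) = p := by
  rw [Set.range_comp' Subtype.val b, ← p.coe_subtype, Submodule.span_image, b.span_eq,
    Submodule.map_subtype_top]

theorem Module.Basis.exists_sum_smul_eq_of_mem {R M ι : Type*} [Fintype ι] [Semiring R]
    [AddCommMonoid M] [Module R M] {p : Submodule R M} (b : Module.Basis ι R p) {x : M}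
    (hx : x ∈ p) : ∃ s : ι → R, ∑ i, s i • (b i : M) = x :=
  (Submodule.mem_span_range_iff_exists_fun R).mp (b.span_range_coe.ge hx)

theorem Module.Basis.le_comap_iff {R M N ι : Type*} [Semiring R] [AddCommMonoid M] [Module R M]
    [AddCommMonoid N] [Module R N] {p : Submodule R M} (b : Module.Basis ι R p) (f : M →ₗ[R] N)
    (q : Submodule R N) : p ≤ q.comap f ↔ ∀ i, f (b i) ∈ q := by
  refine ⟨fun h i => h (b i).2, fun h => ?_⟩
  rw [← b.span_range_coe]
  exact Submodule.span_le.mpr (Set.range_subset_iff.mpr h)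

theorem Module.Basis.linearIndependent_mul_coe {R L ι : Type*} [CommRing R] [Field L]
    [Algebra R L] {p : Submodule R L} (b : Module.Basis ι R p) {a : L} (ha : a ≠ 0) :
    LinearIndependent R fun i => a * (b i : L) :=
  (b.linearIndependent.map' _ p.ker_subtype).map' (LinearMap.mulLeft R a)
    (LinearMap.ker_eq_bot.mpr (mul_right_injective₀ ha))

theorem linearIndependent_pow_of_adjoin_eq_top {K L : Type*} [Field K] [Field L] [Algebra K L]
    [FiniteDimensional K L] {d : ℕ} (hdim : Module.finrank K L = d) {θ : L}
    (hgen : Algebra.adjoin K {θ} = ⊤) : LinearIndependent K fun k : Fin d => θ ^ (k : ℕ) := by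
  have hdeg : (minpoly K θ).natDegree = d := hdim ▸
    (Field.primitive_element_iff_minpoly_natDegree_eq K θ).mp
      (IntermediateField.adjoin_eq_top_of_algebra K _ hgen)
  exact (linearIndependent_pow θ).comp (Fin.cast hdeg.symm) (Fin.cast_injective _)

section FractionalIdeal

variable {A K L : Type*} [CommRing A] [Field K] [Algebra A K] [Field L] [Algebra K L]
  [Algebra A L] [IsScalarTower A K L]

theorem exists_algebraMap_eq_mul_of_mem [IsFractionRing A K] {ι : Type*} [Fintype ι]
    {M : Submodule A L} (b : Module.Basis ι A M) {i₀ : ι} {a₀ : K}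
    (hb : (b i₀ : L) = (algebraMap K L a₀)⁻¹) {α : K} (hα : algebraMap K L α ∈ M) :
    ∃ q : A, algebraMap A K q = a₀ * α := by
  classical
  have hlin : LinearIndependent K fun i => (b i : L) :=
    (LinearIndependent.iff_fractionRing A K).mp (b.linearIndependent.map' M.subtype M.ker_subtype)
  have ha₀ : algebraMap K L a₀ ≠ 0 := fun h => hlin.ne_zero i₀ (by simp [hb, h])
  obtain ⟨q, hq⟩ := b.exists_sum_smul_eq_of_mem hα
  refine ⟨q i₀, Fintype.linearIndependent_iffₛ.mp hlin (fun i => algebraMap A K (q i))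
    (Pi.single i₀ (a₀ * α)) ?_ i₀ |>.trans (Pi.single_eq_same _ _)⟩
  simp_rw [algebraMap_smul, hq, Pi.single_apply, ite_smul, zero_smul, Finset.sum_ite_eq',
    Finset.mem_univ, if_true, hb, Algebra.smul_def, map_mul]
  field_simp

theorem exists_sum_smul_mul_eq_of_inv_mem {ι : Type*} [Fintype ι] {B : Subalgebra A L}
    {I : Submodule B L} (b : Module.Basis ι A (I.restrictScalars A)) {a₀ : L} (ha₀ : a₀ ≠ 0)
    (hinv : a₀⁻¹ ∈ I) (y : B) : ∃ s : ι → A, ∑ i, s i • (a₀ * b i) = y := by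
  have hy : (y : L) * a₀⁻¹ ∈ I := by simpa [Subalgebra.smul_def] using I.smul_mem y hinv
  obtain ⟨s, hs⟩ := b.exists_sum_smul_eq_of_mem hy
  refine ⟨s, ?_⟩
  simp_rw [← mul_smul_comm, ← Finset.mul_sum]
  rw [hs, mul_comm, inv_mul_cancel_right₀ ha₀]

theorem exists_eq_algebraMap_mul_iff {B : Subalgebra A L} {I : Submodule B L} {a₀ : K}
    (ha₀ : a₀ ≠ 0) (hinv : (algebraMap K L a₀)⁻¹ ∈ I)
    (hK : ∀ α : K, algebraMap K L α ∈ I → ∃ q : A, algebraMap A K q = a₀ * α) :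
    (∃ α : K, α ≠ 0 ∧ ∀ x : L, x ∈ I ↔ ∃ y ∈ B, x = algebraMap K L α * y) ↔
      ∀ x ∈ I, algebraMap K L a₀ * x ∈ B := by
  have ha₀L : algebraMap K L a₀ ≠ 0 := by simpa using ha₀
  constructor
  · rintro ⟨α, -, hα⟩ x hx
    obtain ⟨q, hq⟩ := hK α ((hα _).mpr ⟨1, B.one_mem, (mul_one _).symm⟩)
    obtain ⟨y, hy, rfl⟩ := (hα x).mp hx
    rw [← mul_assoc, ← map_mul, ← hq, ← IsScalarTower.algebraMap_apply]
    exact B.mul_mem (B.algebraMap_mem q) hy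
  · intro hB
    refine ⟨a₀⁻¹, inv_ne_zero ha₀, fun x => ⟨fun hx => ⟨_, hB x hx, ?_⟩, ?_⟩⟩
    · rw [map_inv₀, inv_mul_cancel_left₀ ha₀L]
    · rintro ⟨y, hy, rfl⟩
      simpa [Subalgebra.smul_def, mul_comm] using I.smul_mem ⟨y, hy⟩ hinv

end FractionalIdeal

theorem statement13_general
    -- `A = k[t]` : with fraction field `K`
    (𝕜 : Type*) [Field 𝕜]
    (K : Type*) [Field K] [Algebra (Polynomial 𝕜) K] [IsFractionRing (Polynomial 𝕜) K]
    -- `L = K(θ)` of degree `d`, `B` the integral closure of `A` in `L`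
    (L : Type*) [Field L] [Algebra K L] [Algebra (Polynomial 𝕜) L]
    [IsScalarTower (Polynomial 𝕜) K L]
    (d : ℕ) (hd : 0 < d)
    (θ : L) (hgen : Algebra.adjoin K {θ} = ⊤)
    (hdim : Module.finrank K L = d)
    -- `D` : a generator of the index ideal `[B : A[θ]]`, i.e. `D = det TB` where
    -- `TB` expresses the power basis `(1, θ, …, θ^{d−1})` in an `A`-basis of `B`
    (bB : Module.Basis (Fin d) (Polynomial 𝕜) ↥(integralClosure (Polynomial 𝕜) L))
    (TB : Matrix (Fin d) (Fin d) (Polynomial 𝕜))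
    (hTB : ∀ k : Fin d, θ ^ (k : ℕ) = ∑ l, algebraMap (Polynomial 𝕜) L (TB l k) * (bB l : L))
    -- `I` : a fractional ideal of `B`, with a triangular basis
    -- `(1/a_0, g_1(θ)/a_1, …, g_{d−1}(θ)/a_{d−1})` (so that `I* = a_0·I`)
    (I : Submodule ↥(integralClosure (Polynomial 𝕜) L) L)
    (a : Fin d → K) (ha : ∀ i, a i ≠ 0)
    (g : Fin d → Polynomial (Polynomial 𝕜))
    (hgmonic : ∀ i, (g i).Monic) (hgdeg : ∀ i : Fin d, (g i).natDegree = (i : ℕ))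
    (bI : Module.Basis (Fin d) (Polynomial 𝕜) ↥(I.restrictScalars (Polynomial 𝕜)))
    (hbI : ∀ i : Fin d, (bI i : L) = aeval θ (g i) / algebraMap K L (a i))
    -- `TI` : the matrix expressing the power basis `(1, θ, …, θ^{d−1})` in the
    -- `A`-basis `(a_0·bI_i)_i` of the normalised ideal `I* = a_0·I`, so that
    -- `[I* : A[θ]] = (det TI)`
    (TI : Matrix (Fin d) (Fin d) (Polynomial 𝕜))
    (hTI : ∀ k : Fin d, θ ^ (k : ℕ) =
      ∑ l, algebraMap (Polynomial 𝕜) L (TI l k) *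
        (algebraMap K L (a ⟨0, hd⟩) * (bI l : L))) :
    -- conclusion : `h(I) ≥ h(D)`, with equality iff `I = α·B`, `α ∈ K \ {0}`
    polySize TB.det ≤ polySize TI.det ∧
      (polySize TI.det = polySize TB.det ↔
        ∃ α : K, α ≠ 0 ∧ ∀ x : L, x ∈ I ↔
          ∃ y ∈ integralClosure (Polynomial 𝕜) L, x = algebraMap K L α * y) := by
  classical
  have : FiniteDimensional K L := Module.finite_of_finrank_pos (hdim ▸ hd)
  set a₀ : L := algebraMap K L (a ⟨0, hd⟩)
  have ha₀ : a₀ ≠ 0 := by simpa [a₀] using ha ⟨0, hd⟩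
  have hbI₀ : (bI ⟨0, hd⟩ : L) = a₀⁻¹ := by
    rw [hbI, ((hgmonic _).natDegree_eq_zero).mp (hgdeg _), map_one, one_div]
  have hinv : a₀⁻¹ ∈ I := hbI₀ ▸ (bI ⟨0, hd⟩).2
  have hc := bI.linearIndependent_mul_coe ha₀
  choose s hs using fun l => exists_sum_smul_mul_eq_of_inv_mem bI ha₀ hinv (bB l)
  set S : Matrix (Fin d) (Fin d) 𝕜[X] := .of fun i l => s l i
  have hBS : ∀ l, (bB l : L) = ∑ i, S i l • (a₀ * bI i) := fun l => (hs l).symm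
  have hTI' : ∀ k : Fin d, θ ^ (k : ℕ) = ∑ l, TI l k • (a₀ * bI l) := by
    simpa only [Algebra.smul_def] using hTI
  have hTI_eq : TI = S * TB :=
    eq_mul_of_linearIndependent hc hBS (by simpa only [Algebra.smul_def] using hTB) hTI'
  have hTI₀ : TI.det ≠ 0 := det_ne_zero_of_linearIndependent
    ((LinearIndependent.iff_fractionRing 𝕜[X] K).mpr
      (linearIndependent_pow_of_adjoin_eq_top hdim hgen)) hTI'
  rw [hTI_eq, Matrix.det_mul] at hTI₀ ⊢
  obtain ⟨hS₀, hTB₀⟩ := mul_ne_zero_iff.mp hTI₀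
  rw [polySize_eq_natDegree hTI₀, polySize_eq_natDegree hTB₀, natDegree_mul hS₀ hTB₀]
  refine ⟨Nat.le_add_left _ _, ?_⟩
  rw [Nat.add_eq_right, ← isUnit_iff_natDegree_eq_zero hS₀, isUnit_det_iff_forall_mem_span hc hBS,
    Module.Basis.span_range_coe (p := (integralClosure 𝕜[X] L).toSubmodule) bB,
    exists_eq_algebraMap_mul_iff (ha _) hinv fun α hα => exists_algebraMap_eq_mul_of_mem bI hbI₀ hα]
  exact (bI.le_comap_iff (LinearMap.mulLeft _ a₀) _).symm

/-- case `A = k[t]`, `h(p) = deg p`: for a fractional ideal `I`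
of `B` with normalised ideal `I* = a_0·I`, the normalised size
`h(I) = Σ_p v_p([I* : A[θ]])·h(p)` satisfies `h(I) ≥ h(D)`, with equality if and
only if `I = α·B` for some `α ∈ K \ {0}`. -/
theorem statement13
    -- `A = k[t]` : with fraction field `K`
    (𝕜 : Type*) [Field 𝕜]
    (K : Type*) [Field K] [Algebra (Polynomial 𝕜) K] [IsFractionRing (Polynomial 𝕜) K]
    -- `L = K(θ)` of degree `d`, `B` the integral closure of `A` in `L`
    (L : Type*) [Field L] [Algebra K L] [Algebra (Polynomial 𝕜) L]
    [IsScalarTower (Polynomial 𝕜) K L]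
    (f : Polynomial (Polynomial 𝕜)) (d : ℕ) (hd : 0 < d)
    (hf : f.Monic) (hfdeg : f.natDegree = d) (hfirr : Irreducible f)
    (hfsep : (f.map (algebraMap (Polynomial 𝕜) K)).Separable)
    (θ : L) (hroot : aeval θ f = 0) (hgen : Algebra.adjoin K {θ} = ⊤)
    (hdim : Module.finrank K L = d)
    -- `D` : a generator of the index ideal `[B : A[θ]]`, i.e. `D = det TB` where
    -- `TB` expresses the power basis `(1, θ, …, θ^{d−1})` in an `A`-basis of `B`
    (bB : Module.Basis (Fin d) (Polynomial 𝕜) ↥(integralClosure (Polynomial 𝕜) L))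
    (TB : Matrix (Fin d) (Fin d) (Polynomial 𝕜))
    (hTB : ∀ k : Fin d, θ ^ (k : ℕ) = ∑ l, algebraMap (Polynomial 𝕜) L (TB l k) * (bB l : L))
    -- `I` : a fractional ideal of `B`, with a triangular basis
    -- `(1/a_0, g_1(θ)/a_1, …, g_{d−1}(θ)/a_{d−1})` (so that `I* = a_0·I`)
    (I : Submodule ↥(integralClosure (Polynomial 𝕜) L) L) (hIbot : I ≠ ⊥) (hIfg : I.FG)
    (a : Fin d → K) (ha : ∀ i, a i ≠ 0)
    (hchain : ∀ i j : Fin d, i ≤ j → ∃ c : Polynomial 𝕜, a j = a i * algebraMap (Polynomial 𝕜) K c)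
    (g : Fin d → Polynomial (Polynomial 𝕜))
    (hgmonic : ∀ i, (g i).Monic) (hgdeg : ∀ i : Fin d, (g i).natDegree = (i : ℕ))
    (bI : Module.Basis (Fin d) (Polynomial 𝕜) ↥(I.restrictScalars (Polynomial 𝕜)))
    (hbI : ∀ i : Fin d, (bI i : L) = aeval θ (g i) / algebraMap K L (a i))
    -- `TI` : the matrix expressing the power basis `(1, θ, …, θ^{d−1})` in the
    -- `A`-basis `(a_0·bI_i)_i` of the normalised ideal `I* = a_0·I`, so that
    -- `[I* : A[θ]] = (det TI)`
    (TI : Matrix (Fin d) (Fin d) (Polynomial 𝕜))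
    (hTI : ∀ k : Fin d, θ ^ (k : ℕ) =
      ∑ l, algebraMap (Polynomial 𝕜) L (TI l k) *
        (algebraMap K L (a ⟨0, hd⟩) * (bI l : L))) :
    -- conclusion : `h(I) ≥ h(D)`, with equality iff `I = α·B`, `α ∈ K \ {0}`
    polySize TB.det ≤ polySize TI.det ∧
      (polySize TI.det = polySize TB.det ↔
        ∃ α : K, α ≠ 0 ∧ ∀ x : L, x ∈ I ↔
          ∃ y ∈ integralClosure (Polynomial 𝕜) L, x = algebraMap K L α * y) :=
  statement13_general 𝕜 K L d hd θ hgen hdim bB TB hTB I a ha g hgmonic hgdeg bI hbI TI hTI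
end

section
/- Let f, g ∈ O_p[x] be monic separable polynomials of degree d with g ≡ f (mod p²). Then ind_p(f) = 0 if and only if ind_p(g) = 0. In other words, whether p divides the index of f depends only on f modulo p². -/
/-!
Let `R = O[x]/(h)` and let `J` be the radical of `pR`. By the Pohst–Zassenhaus criterion,
`p ∣ ind_p(h)` iff some `u ∉ pR` satisfies `uJ ⊆ pJ`. Such a `u` gives the integral element
`u / p ∉ R`: it stabilises the finitely generated module `J`, which contains the unit `p` of
`K[x]/(h)`. Conversely `p ^ v(det T)` kills the integral closure modulo `R`, so an integral
element outside `R` can be multiplied by powers of `p` and of `J` into some `x ∉ R` with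
`xJ ⊆ R`, and `u = px` works. The criterion only sees `R` modulo `p²`, as `p²R ⊆ pJ ⊆ J`:
for `g ≡ f mod p²`, the `O`-linear bijection `O[x]/(f) → O[x]/(g)` matching the power bases
is multiplicative modulo `p²`, hence maps `J_f` onto `J_g` and transfers the criterion.
-/

open Polynomial

/-- `v` is the `p`-adic valuation on `O` (characterised on nonzero elements). -/
def IsAdicVal {O : Type*} [CommRing O] (p : O) (v : O → ℕ) : Prop :=
  ∀ a : O, a ≠ 0 → p ^ v a ∣ a ∧ ¬ p ^ (v a + 1) ∣ a

theorem isIntegral_of_mul_mem_submodule {R A : Type*} [CommRing R] [CommRing A] [Algebra R A]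
    {M : Submodule R A} (hM : M.FG) {c : A} (hc : IsUnit c) (hcM : c ∈ M) {z : A}
    (hz : ∀ m ∈ M, z * m ∈ M) : IsIntegral R z := by
  have : Module.Finite R M := Module.Finite.iff_fg.mpr hM
  let φ : Module.End R M := (LinearMap.mulLeft R z).restrict hz
  have hpow (n : ℕ) (m : M) : ((φ ^ n) m : A) = z ^ n * m := by
    induction n with
    | zero => simp
    | succ n ih => rw [pow_succ', Module.End.mul_apply, pow_succ', mul_assoc, ← ih]; rfl
  have heval (q : R[X]) (m : M) : ((aeval φ q m : M) : A) = aeval z q * m := by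
    induction q using Polynomial.induction_on' with
    | add q r hq hr => simp [hq, hr, add_mul]
    | monomial n a => simp [hpow, Algebra.smul_def, mul_assoc]
  obtain ⟨q, hq, hφq⟩ : IsIntegral R φ := Algebra.IsIntegral.isIntegral φ
  refine ⟨q, hq, hc.mul_left_cancel ?_⟩
  rw [mul_zero, mul_comm, ← aeval_def, ← heval q ⟨c, hcM⟩, aeval_def, hφq]
  rfl

theorem Ideal.exists_notMem_forall_mul_mem_of_pow_le {R : Type*} [CommRing R] {I J : Ideal R}
    (hI : I ≠ ⊤) {N : ℕ} (hN : J ^ N ≤ I) : ∃ r ∉ I, ∀ j ∈ J, r * j ∈ I := by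
  suffices ∀ t, ∀ y ∉ I, (∀ j ∈ J ^ t, y * j ∈ I) → ∃ r ∉ I, ∀ j ∈ J, r * j ∈ I from
    this N 1 ((Ideal.ne_top_iff_one I).mp hI) fun j hj => by simpa using hN hj
  intro t
  induction t with
  | zero => exact fun y hy hyI => absurd (by simpa using hyI 1 (by simp)) hy
  | succ t ih =>
    intro y hy hyI
    by_cases hJ : ∀ j ∈ J, y * j ∈ I
    · exact ⟨y, hy, hJ⟩
    push Not at hJ
    obtain ⟨j₀, hj₀, hyj₀⟩ := hJ
    exact ih _ hyj₀ fun j hj => by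
      simpa [mul_assoc] using hyI _ (pow_succ' J t ▸ Ideal.mul_mem_mul hj₀ hj)

theorem Submodule.exists_pow_smul_notMem_of_pow_smul_mem {R M : Type*} [Semiring R]
    [AddCommMonoid M] [Module R M] {S : Submodule R M} {x : M} (hx : x ∉ S) (a : R) {n : ℕ}
    (hn : a ^ n • x ∈ S) : ∃ k, a ^ k • x ∉ S ∧ a • a ^ k • x ∈ S := by
  induction n with
  | zero => simp_all
  | succ n ih =>
    by_cases h : a ^ n • x ∈ S
    · exact ih h
    · exact ⟨n, h, by rwa [smul_smul, ← pow_succ']⟩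

section Radical

variable {O R : Type*} [CommRing O] [CommRing R] [Algebra O R]

variable (R) in
def pRadical (p : O) : Ideal R := (Ideal.span {algebraMap O R p}).radical

variable (R) in
/-- `u / p` is a multiplier of the `p`-radical lying outside `R` (Pohst–Zassenhaus). -/
def HasRadicalMultiplier (p : O) : Prop :=
  ∃ u ∉ Ideal.span {algebraMap O R p},
    ∀ j ∈ pRadical R p, u * j ∈ Ideal.span {algebraMap O R p} * pRadical R p

theorem algebraMap_mem_pRadical (p : O) : algebraMap O R p ∈ pRadical R p :=
  Ideal.le_radical (Ideal.mem_span_singleton_self _)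

variable {C : Type*} [CommRing C] [Algebra O C] {π : R →ₐ[O] C} {p : O} {n : ℕ}

theorem not_hasRadicalMultiplier_of_integralClosure_le_range [IsNoetherianRing O]
    [Module.Finite O R] (hπ : Function.Injective π) (hp : IsUnit (algebraMap O C p))
    (hle : integralClosure O C ≤ π.range) : ¬ HasRadicalMultiplier R p := by
  rintro ⟨u, hu, hmul⟩
  obtain ⟨c, hc⟩ := hp
  let M := ((pRadical R p).restrictScalars O).map π.toLinearMap
  have hM : M.FG := (IsNoetherian.noetherian _).map _
  have hpM : algebraMap O C p ∈ M := ⟨_, algebraMap_mem_pRadical p, AlgHom.commutes π p⟩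
  have hzM : ∀ m ∈ M, (↑c⁻¹ * π u) * m ∈ M := by
    rintro _ ⟨j, hj, rfl⟩
    obtain ⟨j', hj', he⟩ := Ideal.mem_span_singleton_mul.mp (hmul j hj)
    refine ⟨j', hj', ?_⟩
    have := congrArg π he
    simp only [map_mul, AlgHom.commutes, ← hc] at this
    simp [mul_assoc, ← this]
  obtain ⟨w, hw⟩ := hle (isIntegral_of_mul_mem_submodule hM c.isUnit (hc ▸ hpM) hzM)
  refine hu (Ideal.mem_span_singleton'.mpr ⟨w, hπ ?_⟩)
  change π w = _ at hw
  rw [map_mul, hw, AlgHom.commutes, ← hc, mul_comm, ← mul_assoc, Units.mul_inv, one_mul]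

theorem mem_pRadical_of_pow_eq_smul (hπ : Function.Injective π)
    (hcond : ∀ y ∈ integralClosure O C, p ^ n • y ∈ π.range) {w : R} {k : ℕ} {y : C}
    (hy : IsIntegral O y) (hwy : π w ^ k = p • y) : w ∈ pRadical R p := by
  obtain ⟨w', hw'⟩ := hcond _ (Subalgebra.pow_mem _ hy (n + 1))
  refine ⟨k * (n + 1), Ideal.mem_span_singleton'.mpr ⟨w', hπ ?_⟩⟩
  change π w' = _ at hw'
  rw [map_mul, hw', AlgHom.commutes, map_pow, pow_mul, hwy, _root_.smul_pow, Algebra.smul_def,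
    Algebra.smul_def, map_pow, map_pow, pow_succ]
  ring

theorem exists_isIntegral_notMem_range_smul_mem
    (hcond : ∀ y ∈ integralClosure O C, p ^ n • y ∈ π.range)
    (hnot : ¬ integralClosure O C ≤ π.range) :
    ∃ z ∈ integralClosure O C, z ∉ π.range ∧ p • z ∈ π.range := by
  obtain ⟨z, hz, hzπ⟩ := Set.not_subset.mp hnot
  obtain ⟨k, hk, hpk⟩ := Submodule.exists_pow_smul_notMem_of_pow_smul_mem
    (S := Subalgebra.toSubmodule π.range) hzπ p (hcond z hz)
  exact ⟨p ^ k • z, Subalgebra.smul_mem _ hz _, hk, hpk⟩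

theorem exists_mul_notMem_range_forall_mul_mem_range [IsNoetherianRing R] {z : C}
    (hz : z ∉ π.range) (hpz : p • z ∈ π.range) :
    ∃ r, π r * z ∉ π.range ∧ ∀ j ∈ pRadical R p, π (r * j) * z ∈ π.range := by
  let I : Ideal R :=
    { carrier := {y | π y * z ∈ π.range}
      add_mem' := fun {a b} (ha : π a * z ∈ π.range) (hb : π b * z ∈ π.range) => by
        simpa [add_mul] using add_mem ha hb
      zero_mem' := ⟨0, by simp⟩
      smul_mem' := fun c y (hy : π y * z ∈ π.range) => by
        simpa [mul_assoc] using mul_mem (AlgHom.mem_range_self π c) hy }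
  have hI : I ≠ ⊤ := fun h => hz (by simpa [I] using (h ▸ Submodule.mem_top : (1 : R) ∈ I))
  obtain ⟨N, hN⟩ : ∃ N, pRadical R p ^ N ≤ Ideal.span {algebraMap O R p} :=
    Ideal.exists_radical_pow_le_of_fg _ (IsNoetherian.noetherian (pRadical R p))
  have hPI : Ideal.span {algebraMap O R p} ≤ I := by
    rw [Ideal.span_le, Set.singleton_subset_iff]
    simpa [I, Algebra.smul_def] using hpz
  exact Ideal.exists_notMem_forall_mul_mem_of_pow_le hI (hN.trans hPI)

theorem hasRadicalMultiplier_of_not_integralClosure_le_range [IsNoetherianRing R]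
    [Algebra.IsIntegral O R] (hπ : Function.Injective π) (hp : IsUnit (algebraMap O C p))
    (hcond : ∀ y ∈ integralClosure O C, p ^ n • y ∈ π.range)
    (hnot : ¬ integralClosure O C ≤ π.range) : HasRadicalMultiplier R p := by
  obtain ⟨z, hz, hzπ, hpz⟩ := exists_isIntegral_notMem_range_smul_mem hcond hnot
  obtain ⟨r, hr, hrJ⟩ := exists_mul_notMem_range_forall_mul_mem_range hzπ hpz
  -- `x = π r * z` is integral, `x ∉ R` and `x J ⊆ R`; the multiplier is `u = p x`.
  choose w hw using show ∀ j ∈ pRadical R p, ∃ w, π w = π (r * j) * z from hrJ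
  have hx : IsIntegral O (π r * z) := ((Algebra.IsIntegral.isIntegral r).map π).mul hz
  have hwJ (j : R) (hj : j ∈ pRadical R p) : w j hj ∈ pRadical R p := by
    obtain ⟨k, hk⟩ := Ideal.mem_radical_iff.mp hj
    obtain ⟨s, hs⟩ := Ideal.mem_span_singleton'.mp hk
    refine mem_pRadical_of_pow_eq_smul hπ hcond (k := k)
      ((hx.pow k).mul ((Algebra.IsIntegral.isIntegral s).map π)) ?_
    rw [hw, map_mul, mul_right_comm, mul_pow, ← map_pow, ← hs, map_mul, AlgHom.commutes,
      Algebra.smul_def]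
    ring
  refine ⟨w _ (algebraMap_mem_pRadical p), fun hu => hr ?_, fun j hj => ?_⟩
  · obtain ⟨a, ha⟩ := Ideal.mem_span_singleton'.mp hu
    refine ⟨a, hp.mul_right_cancel ?_⟩
    change π a * _ = _
    rw [← AlgHom.commutes π, ← map_mul, ha, hw, map_mul]
    ring
  · refine Ideal.mem_span_singleton_mul.mpr ⟨w j hj, hwJ j hj, hπ ?_⟩
    simp only [map_mul, hw, AlgHom.commutes]
    ring

theorem hasRadicalMultiplier_iff_not_integralClosure_le_range [IsNoetherianRing O]
    [Module.Finite O R] [IsNoetherianRing R] (hπ : Function.Injective π)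
    (hp : IsUnit (algebraMap O C p)) (hcond : ∀ y ∈ integralClosure O C, p ^ n • y ∈ π.range) :
    HasRadicalMultiplier R p ↔ ¬ integralClosure O C ≤ π.range :=
  ⟨fun h hle => not_hasRadicalMultiplier_of_integralClosure_le_range hπ hp hle h,
    hasRadicalMultiplier_of_not_integralClosure_le_range hπ hp hcond⟩

end Radical

section Transfer

variable {O R S : Type*} [CommRing O] [CommRing R] [Algebra O R] [CommRing S] [Algebra O S]
  {p : O}

def IsMulModSq (p : O) (e : R →ₗ[O] S) : Prop :=
  ∀ x y, e (x * y) - e x * e y ∈ Ideal.span {algebraMap O S p ^ 2}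

theorem LinearMap.map_mem_span_algebraMap (e : R →ₗ[O] S) (a : O) {x : R}
    (hx : x ∈ Ideal.span {algebraMap O R a}) : e x ∈ Ideal.span {algebraMap O S a} := by
  obtain ⟨r, rfl⟩ := Ideal.mem_span_singleton'.mp hx
  rw [mul_comm, ← Algebra.smul_def, map_smul, Algebra.smul_def]
  exact Ideal.mul_mem_right _ _ (Ideal.mem_span_singleton_self _)

theorem span_sq_le_mul_pRadical (p : O) :
    Ideal.span {algebraMap O S p ^ 2} ≤ Ideal.span {algebraMap O S p} * pRadical S p := by
  rw [sq, ← Ideal.span_singleton_mul_span_singleton]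
  exact Ideal.mul_mono_right ((Ideal.span_singleton_le_iff_mem _).mpr (algebraMap_mem_pRadical p))

namespace IsMulModSq

variable {e : R →ₗ[O] S} (he : IsMulModSq p e)
include he

theorem pow_succ_sub_mem (x : R) (n : ℕ) :
    e (x ^ (n + 1)) - e x ^ (n + 1) ∈ Ideal.span {algebraMap O S p ^ 2} := by
  induction n with
  | zero => simp
  | succ n ih =>
    have := add_mem (he x (x ^ (n + 1))) (Ideal.mul_mem_left _ (e x) ih)
    rw [pow_succ' x, pow_succ' (e x)]
    convert this using 1
    ring

theorem map_mem_pRadical {x : R} (hx : x ∈ pRadical R p) : e x ∈ pRadical S p := by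
  obtain ⟨n, hn⟩ := hx
  refine ⟨n + 1, ?_⟩
  have hp : e (x ^ (n + 1)) ∈ Ideal.span {algebraMap O S p} :=
    e.map_mem_span_algebraMap p (pow_succ x n ▸ Ideal.mul_mem_right _ _ hn)
  have hsq : Ideal.span {algebraMap O S p ^ 2} ≤ Ideal.span {algebraMap O S p} :=
    Ideal.span_singleton_le_span_singleton.mpr (dvd_pow_self _ two_ne_zero)
  simpa using sub_mem hp (hsq (he.pow_succ_sub_mem x n))

theorem map_mem_mul_pRadical {x : R}
    (hx : x ∈ Ideal.span {algebraMap O R p} * pRadical R p) :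
    e x ∈ Ideal.span {algebraMap O S p} * pRadical S p := by
  obtain ⟨j, hj, rfl⟩ := Ideal.mem_span_singleton_mul.mp hx
  rw [← Algebra.smul_def, map_smul, Algebra.smul_def]
  exact Ideal.mem_span_singleton_mul.mpr ⟨_, he.map_mem_pRadical hj, rfl⟩

end IsMulModSq

theorem IsMulModSq.symm {e : R ≃ₗ[O] S} (he : IsMulModSq p (e : R →ₗ[O] S)) :
    IsMulModSq p (e.symm : S →ₗ[O] R) := by
  intro a b
  obtain ⟨x, rfl⟩ := e.surjective a
  obtain ⟨y, rfl⟩ := e.surjective b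
  have := (e.symm : S →ₗ[O] R).map_mem_span_algebraMap (p ^ 2) (by simpa using he x y)
  simpa [map_pow] using neg_mem this

theorem HasRadicalMultiplier.of_linearEquiv (e : R ≃ₗ[O] S) (he : IsMulModSq p (e : R →ₗ[O] S))
    (h : HasRadicalMultiplier S p) : HasRadicalMultiplier R p := by
  obtain ⟨u, hu, hmul⟩ := h
  refine ⟨e.symm u, fun h' => hu ?_, fun j hj => ?_⟩
  · simpa using (e : R →ₗ[O] S).map_mem_span_algebraMap p h'
  · have hej : e (e.symm u * j) ∈ Ideal.span {algebraMap O S p} * pRadical S p := by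
      have := add_mem (span_sq_le_mul_pRadical p (he (e.symm u) j))
        (hmul _ (he.map_mem_pRadical hj))
      simpa using this
    simpa using he.symm.map_mem_mul_pRadical hej

theorem hasRadicalMultiplier_congr (e : R ≃ₗ[O] S) (he : IsMulModSq p (e : R →ₗ[O] S)) :
    HasRadicalMultiplier R p ↔ HasRadicalMultiplier S p :=
  ⟨.of_linearEquiv e.symm he.symm, .of_linearEquiv e he⟩

end Transfer

theorem Polynomial.modByMonic_modByMonic_of_natDegree_eq {O : Type*} [CommRing O] [Nontrivial O]
    {f g : O[X]} (hf : f.Monic) (hg : g.Monic) (hfg : f.natDegree = g.natDegree) (P : O[X]) :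
    P %ₘ g %ₘ f = P %ₘ g := by
  rw [modByMonic_eq_self_iff hf, degree_eq_natDegree hf.ne_zero, hfg,
    ← degree_eq_natDegree hg.ne_zero]
  exact degree_modByMonic_lt P hg

namespace AdjoinRoot

section ModByMonic

variable {O : Type*} [CommRing O] {f g : O[X]}

/-- Sends `x ^ k` to `x ^ k` for `k < deg f`; multiplicative only modulo `g - f`. -/
noncomputable def modByMonicEquiv [Nontrivial O] (hf : f.Monic) (hg : g.Monic)
    (hfg : f.natDegree = g.natDegree) : AdjoinRoot f ≃ₗ[O] AdjoinRoot g :=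
  .ofLinearMap ((mkₐ g).toLinearMap ∘ₗ modByMonicHom hf) ((mkₐ f).toLinearMap ∘ₗ modByMonicHom hg)
    (by
      ext x
      induction x using AdjoinRoot.induction_on with | ih P =>
      simpa [modByMonic_modByMonic_of_natDegree_eq hf hg hfg] using mk_leftInverse hg (mk g P))
    (by
      ext x
      induction x using AdjoinRoot.induction_on with | ih P =>
      simpa [modByMonic_modByMonic_of_natDegree_eq hg hf hfg.symm] using mk_leftInverse hf (mk f P))

theorem mk_mem_span_of_dvd {a : O} (hfg : C a ∣ g - f) {P : O[X]} (hP : f ∣ P) :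
    mk g P ∈ Ideal.span {algebraMap O (AdjoinRoot g) a} := by
  obtain ⟨E, hE⟩ := hfg
  obtain ⟨Q, rfl⟩ := hP
  refine Ideal.mem_span_singleton'.mpr ⟨-mk g (E * Q), ?_⟩
  rw [show f = g - C a * E by rw [← hE]; ring, algebraMap_eq, ← mk_C]
  simp only [map_mul, map_sub, mk_self]
  ring

theorem isMulModSq_modByMonicEquiv [Nontrivial O] {p : O} (hf : f.Monic) (hg : g.Monic)
    (hfg : f.natDegree = g.natDegree) (hcong : C (p ^ 2) ∣ g - f) :
    IsMulModSq p (modByMonicEquiv hf hg hfg : AdjoinRoot f →ₗ[O] AdjoinRoot g) := by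
  intro x y
  induction x using AdjoinRoot.induction_on with | ih P =>
  induction y using AdjoinRoot.induction_on with | ih Q =>
  rw [← map_pow]
  have hdvd : f ∣ P * Q %ₘ f - P %ₘ f * (Q %ₘ f) := by
    simp only [modByMonic_eq_sub_mul_div _ f]
    exact ⟨Q /ₘ f * P + P /ₘ f * Q - (P * Q) /ₘ f - f * (P /ₘ f) * (Q /ₘ f), by ring⟩
  simpa [modByMonicEquiv, ← map_mul, ← map_sub] using mk_mem_span_of_dvd hcong hdvd

end ModByMonic

section Lift

variable {O C : Type*} [CommRing O] [CommRing C] [Algebra O C] {h : O[X]} {ϑ : C}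

theorem isAdjoinRoot_liftHom_comp_powerBasis' (hh : h.Monic) (hϑ : aeval ϑ h = 0) :
    (AdjoinRoot.isAdjoinRoot h).liftHom ϑ hϑ ∘ (powerBasis' hh).basis =
      fun k : Fin h.natDegree => ϑ ^ (k : ℕ) := by
  ext k
  rw [Function.comp_apply, PowerBasis.basis_eq_pow, powerBasis'_gen, map_pow,
    ← isAdjoinRoot_root_eq_root, IsAdjoinRoot.liftHom_root]

theorem range_isAdjoinRoot_liftHom (hh : h.Monic) (hϑ : aeval ϑ h = 0) :
    Subalgebra.toSubmodule ((AdjoinRoot.isAdjoinRoot h).liftHom ϑ hϑ).range =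
      Submodule.span O (Set.range fun k : Fin h.natDegree => ϑ ^ (k : ℕ)) := by
  change LinearMap.range ((AdjoinRoot.isAdjoinRoot h).liftHom ϑ hϑ).toLinearMap = _
  rw [LinearMap.range_eq_map, ← (powerBasis' hh).basis.span_eq, Submodule.map_span,
    ← Set.range_comp, AlgHom.coe_toLinearMap, isAdjoinRoot_liftHom_comp_powerBasis']
  rfl

theorem isAdjoinRoot_liftHom_injective (hh : h.Monic) (hϑ : aeval ϑ h = 0)
    (hli : LinearIndependent O fun k : Fin h.natDegree => ϑ ^ (k : ℕ)) :
    Function.Injective ((AdjoinRoot.isAdjoinRoot h).liftHom ϑ hϑ) := by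
  have := Submodule.range_ker_disjoint
    (f := ((AdjoinRoot.isAdjoinRoot h).liftHom ϑ hϑ).toLinearMap) (v := (powerBasis' hh).basis)
    (by rwa [AlgHom.coe_toLinearMap, isAdjoinRoot_liftHom_comp_powerBasis'])
  rw [(powerBasis' hh).basis.span_eq, top_disjoint] at this
  exact LinearMap.ker_eq_bot.mp this

end Lift

end AdjoinRoot

section Coordinates

open Matrix

variable {ι O M : Type*} [Fintype ι] [CommRing O] [AddCommGroup M] [Module O M]
  {N : Submodule O M} (b : Module.Basis ι O N) {v : ι → M} {T : Matrix ι ι O}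
  (hT : ∀ k, v k = ∑ l, T l k • (b l : M))
include hT

theorem sum_smul_eq_sum_mulVec_smul (c : ι → O) :
    ∑ k, c k • v k = ∑ l, (T *ᵥ c) l • (b l : M) := by
  simp only [hT, Finset.smul_sum, smul_smul, mulVec, dotProduct, Finset.sum_smul]
  rw [Finset.sum_comm]
  simp_rw [mul_comm]

theorem mem_span_iff_mem_range_mulVec (x : N) :
    (x : M) ∈ Submodule.span O (Set.range v) ↔ b.equivFun x ∈ Set.range T.mulVec := by
  rw [Submodule.mem_span_range_iff_exists_fun]
  refine exists_congr fun c => ?_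
  rw [sum_smul_eq_sum_mulVec_smul b hT, ← b.equivFun.symm.injective.eq_iff,
    LinearEquiv.symm_apply_apply, ← Subtype.val_injective.eq_iff]
  simp [Module.Basis.equivFun_symm_apply]

theorem le_span_iff_isUnit_det [DecidableEq ι] :
    N ≤ Submodule.span O (Set.range v) ↔ IsUnit T.det := by
  rw [← isUnit_iff_isUnit_det, ← mulVec_surjective_iff_isUnit]
  constructor
  · intro hle y
    have := (mem_span_iff_mem_range_mulVec b hT (b.equivFun.symm y)).mp (hle (Subtype.prop _))
    rwa [LinearEquiv.apply_symm_apply] at this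
  · exact fun hsurj x hx => (mem_span_iff_mem_range_mulVec b hT ⟨x, hx⟩).mpr (hsurj _)

theorem det_smul_mem_span [DecidableEq ι] {x : M} (hx : x ∈ N) :
    T.det • x ∈ Submodule.span O (Set.range v) := by
  refine (mem_span_iff_mem_range_mulVec b hT (T.det • ⟨x, hx⟩)).mpr
    ⟨T.adjugate *ᵥ b.equivFun ⟨x, hx⟩, ?_⟩
  rw [mulVec_mulVec, mul_adjugate, smul_mulVec, one_mulVec, map_smul]

theorem det_ne_zero_of_linearIndependent_s16 [DecidableEq ι] [IsDomain O]
    (hv : LinearIndependent O v) : T.det ≠ 0 := by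
  intro h
  obtain ⟨c, hc, hTc⟩ := exists_mulVec_eq_zero_iff.mpr h
  refine hc (funext (Fintype.linearIndependent_iff.mp hv c ?_))
  simp [sum_smul_eq_sum_mulVec_smul b hT, hTc]

end Coordinates

theorem IsAdicVal.eq_zero_iff_isUnit {O : Type*} [CommRing O] [IsDomain O]
    [IsDiscreteValuationRing O] {p : O} (hp : Irreducible p) {v : O → ℕ} (hv : IsAdicVal p v)
    {x : O} (hx : x ≠ 0) : v x = 0 ↔ IsUnit x := by
  obtain ⟨hdvd, hndvd⟩ := hv x hx
  refine ⟨fun h0 => ?_, fun hu => ?_⟩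
  · rw [h0, zero_add, pow_one] at hndvd
    by_contra hnu
    have hm := (IsLocalRing.mem_maximalIdeal x).mpr hnu
    rw [hp.maximalIdeal_eq] at hm
    exact hndvd (Ideal.mem_span_singleton.mp hm)
  · by_contra h0
    exact hp.not_isUnit (isUnit_of_dvd_unit ((dvd_pow_self p h0).trans hdvd) hu)

theorem adicVal_det_eq_zero_iff_not_hasRadicalMultiplier {O K C : Type*} [CommRing O] [IsDomain O]
    [IsDiscreteValuationRing O] [Field K] [Algebra O K] [IsFractionRing O K] [CommRing C]
    [Algebra K C] [Algebra O C] [IsScalarTower O K C] {p : O} (hp : Irreducible p)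
    {v : O → ℕ} (hv : IsAdicVal p v) {h : O[X]} (hh : h.Monic) {d : ℕ} (hhdeg : h.natDegree = d)
    {ϑ : C} (hϑ : aeval ϑ h = 0) (hli : LinearIndependent K fun k : Fin d => ϑ ^ (k : ℕ))
    (bO : Module.Basis (Fin d) O (integralClosure O C)) {T : Matrix (Fin d) (Fin d) O}
    (hT : ∀ k : Fin d, ϑ ^ (k : ℕ) = ∑ l, algebraMap O C (T l k) * (bO l : C)) :
    v T.det = 0 ↔ ¬ HasRadicalMultiplier (AdjoinRoot h) p := by
  subst hhdeg
  have : Module.Finite O (AdjoinRoot h) := hh.finite_adjoinRoot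
  set π := (AdjoinRoot.isAdjoinRoot h).liftHom ϑ hϑ
  let bN : Module.Basis (Fin h.natDegree) O (Subalgebra.toSubmodule (integralClosure O C)) := bO
  have hT' (k : Fin h.natDegree) : ϑ ^ (k : ℕ) = ∑ l, T l k • (bN l : C) := by
    simp_rw [hT k, Algebra.smul_def]
    rfl
  have hliO := hli.restrict_scalars' O
  have hdet := det_ne_zero_of_linearIndependent_s16 bN hT' hliO
  obtain ⟨n, u, hu⟩ := IsDiscreteValuationRing.eq_unit_mul_pow_irreducible hdet hp
  have hcond (y : C) (hy : y ∈ integralClosure O C) : p ^ n • y ∈ π.range := by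
    rw [← Subalgebra.mem_toSubmodule, AdjoinRoot.range_isAdjoinRoot_liftHom hh hϑ]
    have := Submodule.smul_mem _ (↑u⁻¹ : O) (det_smul_mem_span bN hT' hy)
    rwa [smul_smul, hu, ← mul_assoc, Units.inv_mul, one_mul] at this
  have hpC : IsUnit (algebraMap O C p) := by
    rw [IsScalarTower.algebraMap_apply O K C]
    exact (isUnit_iff_ne_zero.mpr
      ((map_ne_zero_iff _ (IsFractionRing.injective O K)).mpr hp.ne_zero)).map _
  rw [hv.eq_zero_iff_isUnit hp hdet, hasRadicalMultiplier_iff_not_integralClosure_le_range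
    (AdjoinRoot.isAdjoinRoot_liftHom_injective hh hϑ hliO) hpC hcond, not_not,
    ← Subalgebra.toSubmodule.le_iff_le, AdjoinRoot.range_isAdjoinRoot_liftHom hh hϑ,
    le_span_iff_isUnit_det bN hT']

theorem statement16_general
    -- `O_p` : a complete discrete valuation ring with prime element `p`
    (O : Type*) [CommRing O] [IsDomain O] [IsDiscreteValuationRing O]
    (p : O) (hp : Irreducible p)
    (v : O → ℕ) (hv : IsAdicVal p v)
    -- `K_p`, the fraction field of `O_p`
    (K : Type*) [Field K] [Algebra O K] [IsFractionRing O K]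
    -- `f` and `g`, monic and separable, of degree `d`
    (f g : Polynomial O) (d : ℕ)
    (hf : f.Monic) (hfdeg : f.natDegree = d)
    (hg : g.Monic) (hgdeg : g.natDegree = d)
    -- `g ≡ f mod p²`
    (hcong : ∀ k, p ^ 2 ∣ (g - f).coeff k)
    -- `ind_p(f) = v_p(det Tf)`, where `Tf` expresses the power basis
    -- `(1, ϑf, …, ϑf^{d−1})` of `Cf = K_p[x]/(f)` in an `O_p`-basis of the integral
    -- closure of `O_p` in `Cf`
    (Cf : Type*) [CommRing Cf] [Algebra K Cf] [Algebra O Cf] [IsScalarTower O K Cf]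
    (ϑf : Cf) (hϑf : aeval ϑf (f.map (algebraMap O K)) = 0)
    (bCf : Module.Basis (Fin d) K Cf) (hbCf : ∀ k : Fin d, bCf k = ϑf ^ (k : ℕ))
    (bOf : Module.Basis (Fin d) O ↥(integralClosure O Cf))
    (Tf : Matrix (Fin d) (Fin d) O)
    (hTf : ∀ k : Fin d, ϑf ^ (k : ℕ) = ∑ l, algebraMap O Cf (Tf l k) * (bOf l : Cf))
    -- `ind_p(g) = v_p(det Tg)`, defined in the same way
    (Cg : Type*) [CommRing Cg] [Algebra K Cg] [Algebra O Cg] [IsScalarTower O K Cg]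
    (ϑg : Cg) (hϑg : aeval ϑg (g.map (algebraMap O K)) = 0)
    (bCg : Module.Basis (Fin d) K Cg) (hbCg : ∀ k : Fin d, bCg k = ϑg ^ (k : ℕ))
    (bOg : Module.Basis (Fin d) O ↥(integralClosure O Cg))
    (Tg : Matrix (Fin d) (Fin d) O)
    (hTg : ∀ k : Fin d, ϑg ^ (k : ℕ) = ∑ l, algebraMap O Cg (Tg l k) * (bOg l : Cg)) :
    -- conclusion : `ind_p(f) = 0 ↔ ind_p(g) = 0`
    (v Tf.det = 0 ↔ v Tg.det = 0) := by
  have hfg : f.natDegree = g.natDegree := hfdeg.trans hgdeg.symm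
  rw [adicVal_det_eq_zero_iff_not_hasRadicalMultiplier hp hv hf hfdeg
      (by rwa [aeval_map_algebraMap] at hϑf) (by simpa only [← hbCf] using bCf.linearIndependent)
      bOf hTf,
    adicVal_det_eq_zero_iff_not_hasRadicalMultiplier hp hv hg hgdeg
      (by rwa [aeval_map_algebraMap] at hϑg) (by simpa only [← hbCg] using bCg.linearIndependent)
      bOg hTg,
    hasRadicalMultiplier_congr (AdjoinRoot.modByMonicEquiv hf hg hfg)
      (AdjoinRoot.isMulModSq_modByMonicEquiv hf hg hfg ((C_dvd_iff_dvd_coeff _ _).mpr hcong))]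

/-- if `f, g ∈ O_p[x]` are monic separable of degree `d` with
`g ≡ f mod p²`, then `ind_p(f) = 0` iff `ind_p(g) = 0`: whether `p` divides the
index of `f` depends only on `f` modulo `p²`. -/
theorem statement16
    -- `O_p` : a complete discrete valuation ring with prime element `p`
    (O : Type*) [CommRing O] [IsDomain O] [IsDiscreteValuationRing O]
    [IsAdicComplete (IsLocalRing.maximalIdeal O) O]
    (p : O) (hp : Irreducible p)
    (v : O → ℕ) (hv : IsAdicVal p v)
    -- `K_p`, the fraction field of `O_p`
    (K : Type*) [Field K] [Algebra O K] [IsFractionRing O K]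
    -- `f` and `g`, monic and separable, of degree `d`
    (f g : Polynomial O) (d : ℕ) (hd : 0 < d)
    (hf : f.Monic) (hfdeg : f.natDegree = d)
    (hfsep : (f.map (algebraMap O K)).Separable)
    (hg : g.Monic) (hgdeg : g.natDegree = d)
    (hgsep : (g.map (algebraMap O K)).Separable)
    -- `g ≡ f mod p²`
    (hcong : ∀ k, p ^ 2 ∣ (g - f).coeff k)
    -- `ind_p(f) = v_p(det Tf)`, where `Tf` expresses the power basis
    -- `(1, ϑf, …, ϑf^{d−1})` of `Cf = K_p[x]/(f)` in an `O_p`-basis of the integral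
    -- closure of `O_p` in `Cf`
    (Cf : Type*) [CommRing Cf] [Algebra K Cf] [Algebra O Cf] [IsScalarTower O K Cf]
    (ϑf : Cf) (hϑf : aeval ϑf (f.map (algebraMap O K)) = 0)
    (bCf : Module.Basis (Fin d) K Cf) (hbCf : ∀ k : Fin d, bCf k = ϑf ^ (k : ℕ))
    (bOf : Module.Basis (Fin d) O ↥(integralClosure O Cf))
    (Tf : Matrix (Fin d) (Fin d) O)
    (hTf : ∀ k : Fin d, ϑf ^ (k : ℕ) = ∑ l, algebraMap O Cf (Tf l k) * (bOf l : Cf))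
    -- `ind_p(g) = v_p(det Tg)`, defined in the same way
    (Cg : Type*) [CommRing Cg] [Algebra K Cg] [Algebra O Cg] [IsScalarTower O K Cg]
    (ϑg : Cg) (hϑg : aeval ϑg (g.map (algebraMap O K)) = 0)
    (bCg : Module.Basis (Fin d) K Cg) (hbCg : ∀ k : Fin d, bCg k = ϑg ^ (k : ℕ))
    (bOg : Module.Basis (Fin d) O ↥(integralClosure O Cg))
    (Tg : Matrix (Fin d) (Fin d) O)
    (hTg : ∀ k : Fin d, ϑg ^ (k : ℕ) = ∑ l, algebraMap O Cg (Tg l k) * (bOg l : Cg)) :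
    -- conclusion : `ind_p(f) = 0 ↔ ind_p(g) = 0`
    (v Tf.det = 0 ↔ v Tg.det = 0) :=
  statement16_general O p hp v hv K f g d hf hfdeg hg hgdeg hcong Cf ϑf hϑf bCf hbCf bOf Tf hTf Cg
    ϑg hϑg bCg hbCg bOg Tg hTg
end
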